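/- arXiv:1102.4892 — 4 statements merged into one kernel-verified Lean document; each statement's English description precedes it below -/
import Mathlib

section
/- Let N be a positive integer, let f₁, …, f_N : [0,1] → [0,∞) be measurable functions, and let ε > 0. Then there exist orientation-preserving diffeomorphisms φ₁, …, φ_N of [0,1] such that ∫₀¹ max_{1≤i≤N} ( f_i(φ_i(t))·φ_i'(t) ) dt ≤ max_{1≤i≤N} ∫₀¹ f_i(t) dt + ε, where the integrals are Lebesgue integrals with values in [0,∞]. -/
open MeasureTheory Function Set Polynomial
open scoped ENNReal NNReal

noncomputable section

/-- An orientation-preserving diffeomorphism of `[0,1]`: a smooth map `φ : ℝ → ℝ` with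
`φ 0 = 0`, `φ 1 = 1` and `φ' > 0` on `[0,1]`. -/
def IsDiffeoI (φ : ℝ → ℝ) : Prop :=
  ContDiff ℝ (⊤ : ℕ∞) φ ∧ φ 0 = 0 ∧ φ 1 = 1 ∧ ∀ t ∈ Set.Icc (0:ℝ) 1, 0 < deriv φ t

noncomputable def antider (p : ℝ[X]) : ℝ[X] :=
  p.sum fun n a => C (a / (n + 1)) * X ^ (n + 1)

theorem antider_derivative (p : ℝ[X]) : (antider p).derivative = p := by
  unfold antider
  rw [Polynomial.sum, map_sum]
  conv_rhs => rw [← Polynomial.sum_C_mul_X_pow_eq p]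
  rw [Polynomial.sum]
  refine Finset.sum_congr rfl fun n _ => ?_
  rw [derivative_C_mul, derivative_X_pow]
  push_cast
  rw [← mul_assoc, ← Polynomial.C_mul]
  congr 2
  have : (n : ℝ) + 1 ≠ 0 := by positivity
  field_simp

theorem antider_eval_zero (p : ℝ[X]) : (antider p).eval 0 = 0 := by
  unfold antider
  rw [Polynomial.sum, Polynomial.eval_finset_sum]
  simp

theorem antider_hasDerivAt (p : ℝ[X]) (x : ℝ) :
    HasDerivAt (fun y => (antider p).eval y) (p.eval x) x := by
  have := (antider p).hasDerivAt x
  rwa [antider_derivative] at this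

theorem antider_eval_eq_integral (p : ℝ[X]) (a b : ℝ) :
    (antider p).eval b - (antider p).eval a = ∫ x in a..b, p.eval x := by
  rw [intervalIntegral.integral_eq_sub_of_hasDerivAt
    (fun x _ => antider_hasDerivAt p x) ((p.continuous_aeval).intervalIntegrable a b)]

theorem poly_contDiff (p : ℝ[X]) : ContDiff ℝ (⊤ : ℕ∞) (fun x : ℝ => p.eval x) := by
  refine ContDiff.of_le ?_ le_top
  exact contDiff_omega_iff_analyticOnNhd.mpr (AnalyticOnNhd.eval_polynomial p)



/-- The key construction. -/
theorem key_diffeo (q : ℝ[X]) (δ : ℝ) (hδ : 0 < δ) (hq : ∀ x, δ ≤ q.eval x) :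
    ∃ φ : ℝ → ℝ, IsDiffeoI φ ∧ StrictMono φ ∧ φ '' (Icc 0 1) = Icc 0 1 ∧
      (∀ t, HasDerivAt φ ((∫ x in (0:ℝ)..1, q.eval x) / q.eval (φ t)) t) ∧
      (∀ t, deriv φ t = (∫ x in (0:ℝ)..1, q.eval x) / q.eval (φ t)) := by
  set T : ℝ := ∫ x in (0:ℝ)..1, q.eval x with hT
  have hTpos : 0 < T := by
    have : ∫ x in (0:ℝ)..1, δ ≤ T :=
      intervalIntegral.integral_mono_on zero_le_one (intervalIntegrable_const)
        ((q.continuous_aeval).intervalIntegrable 0 1) (fun x _ => hq x)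
    simpa using lt_of_lt_of_le (by simpa using hδ) this
  have hTne : T ≠ 0 := ne_of_gt hTpos
  set ψ : ℝ → ℝ := fun x => (antider q).eval x / T with hψ
  have hψd : ∀ x, HasDerivAt ψ (q.eval x / T) x := fun x =>
    (antider_hasDerivAt q x).div_const T
  have hψc : ContDiff ℝ (⊤ : ℕ∞) ψ := (poly_contDiff (antider q)).div_const T
  have hψderiv : ∀ x, deriv ψ x = q.eval x / T := fun x => (hψd x).deriv
  have hqpos : ∀ x, 0 < q.eval x := fun x => lt_of_lt_of_le hδ (hq x)
  have hψmono : StrictMono ψ := by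
    apply strictMono_of_deriv_pos
    intro x
    rw [hψderiv x]
    exact div_pos (hqpos x) hTpos
  have hψ0 : ψ 0 = 0 := by simp [hψ, antider_eval_zero]
  have hψ1 : ψ 1 = 1 := by
    have h := antider_eval_eq_integral q 0 1
    rw [antider_eval_zero, sub_zero] at h
    simp [hψ, h, ← hT, div_self hTne]
  -- lower bound for growth: ψ x - ψ y ≥ (δ/T) * (x - y) for y ≤ x
  have growth : ∀ y x : ℝ, y ≤ x → δ / T * (x - y) ≤ ψ x - ψ y := by
    intro y x hyx
    have h1 : ψ x - ψ y = ∫ t in y..x, q.eval t / T := by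
      rw [intervalIntegral.integral_eq_sub_of_hasDerivAt (fun t _ => hψd t)
        (((q.continuous_aeval).div_const T).intervalIntegrable y x)]
    have h2 : ∫ t in y..x, δ / T ≤ ∫ t in y..x, q.eval t / T :=
      intervalIntegral.integral_mono_on hyx intervalIntegrable_const
        (((q.continuous_aeval).div_const T).intervalIntegrable y x)
        (fun t _ => by gcongr; exact hq t)
    rw [h1]
    refine le_trans (le_of_eq ?_) h2
    rw [intervalIntegral.integral_const, smul_eq_mul, mul_comm]
  have hψcont : Continuous ψ := hψc.continuous
  have hlin_top : Filter.Tendsto (fun x : ℝ => ψ 0 + δ / T * x) Filter.atTop Filter.atTop :=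
    Filter.tendsto_atTop_add_const_left _ _
      (Filter.Tendsto.const_mul_atTop (div_pos hδ hTpos) Filter.tendsto_id)
  have hψtop : Filter.Tendsto ψ Filter.atTop Filter.atTop := by
    apply Filter.tendsto_atTop_mono' _ _ hlin_top
    filter_upwards [Filter.eventually_ge_atTop (0:ℝ)] with x hx
    have := growth 0 x hx
    simp only [sub_zero] at this
    linarith
  have hlin_bot : Filter.Tendsto (fun x : ℝ => ψ 0 + δ / T * x) Filter.atBot Filter.atBot :=
    Filter.tendsto_atBot_add_const_left _ _
      (Filter.Tendsto.const_mul_atBot (div_pos hδ hTpos) Filter.tendsto_id)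
  have hψbot : Filter.Tendsto ψ Filter.atBot Filter.atBot := by
    apply Filter.tendsto_atBot_mono' _ _ hlin_bot
    filter_upwards [Filter.eventually_le_atBot (0:ℝ)] with x hx
    have := growth x 0 hx
    simp only [zero_sub] at this
    nlinarith
  have hψsurj : Function.Surjective ψ := hψcont.surjective hψtop hψbot
  set E : ℝ ≃o ℝ := StrictMono.orderIsoOfSurjective ψ hψmono hψsurj with hE
  have hEcoe : (E : ℝ → ℝ) = ψ := rfl
  set H : ℝ ≃ₜ ℝ := E.toHomeomorph with hH
  have hHcoe : (H : ℝ → ℝ) = ψ := rfl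
  set φ : ℝ → ℝ := fun t => H.symm t with hφ
  have hψφ : ∀ t, ψ (φ t) = t := fun t => H.apply_symm_apply t
  have hφψ : ∀ x, φ (ψ x) = x := fun x => H.symm_apply_apply x
  have hφc : ContDiff ℝ (⊤ : ℕ∞) φ :=
    H.contDiff_symm_deriv (f' := fun x => q.eval x / T)
      (fun x => ne_of_gt (div_pos (hqpos x) hTpos)) hψd hψc
  have hφd : ∀ t, HasDerivAt φ (deriv φ t) t := fun t =>
    ((hφc.differentiable (by simp)) t).hasDerivAt
  have hφderiv : ∀ t, deriv φ t = T / q.eval (φ t) := by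
    intro t
    have hcomp : HasDerivAt (ψ ∘ φ) (q.eval (φ t) / T * deriv φ t) t :=
      (hψd (φ t)).comp t (hφd t)
    have hid : HasDerivAt (ψ ∘ φ) 1 t := by
      have : (ψ ∘ φ) = id := funext hψφ
      rw [this]
      simpa using hasDerivAt_id t
    have huniq : q.eval (φ t) / T * deriv φ t = 1 := hcomp.unique hid
    field_simp at huniq
    rw [eq_div_iff (ne_of_gt (hqpos (φ t)))]
    linear_combination huniq
  have hφ0 : φ 0 = 0 := by have := hφψ 0; rwa [hψ0] at this
  have hφ1 : φ 1 = 1 := by have := hφψ 1; rwa [hψ1] at this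
  have hφmono : StrictMono φ := fun a b hab => (E.symm.strictMono : StrictMono E.symm) hab
  have hφderiv_pos : ∀ t, 0 < deriv φ t := fun t => by
    rw [hφderiv t]; exact div_pos hTpos (hqpos (φ t))
  refine ⟨φ, ⟨hφc, hφ0, hφ1, fun t _ => hφderiv_pos t⟩, hφmono, ?_, ?_, hφderiv⟩
  · -- image of Icc
    apply Subset.antisymm
    · rintro - ⟨x, hx, rfl⟩
      exact ⟨by rw [← hφ0]; exact (hφmono.le_iff_le).2 hx.1,
             by rw [← hφ1]; exact (hφmono.le_iff_le).2 hx.2⟩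
    · intro y hy
      rcases intermediate_value_Icc (zero_le_one) (hφc.continuous.continuousOn)
        (by rw [hφ0, hφ1]; exact hy) with ⟨x, hx, hxy⟩
      exact ⟨x, hx, hxy⟩
  · intro t
    have := hφd t
    rwa [hφderiv t] at this

theorem cov_lemma (φ : ℝ → ℝ) (d : ℝ → ℝ)
    (hd : ∀ x, HasDerivAt φ (d x) x) (hpos : ∀ x, 0 ≤ d x)
    (hinj : InjOn φ (Icc 0 1)) (him : φ '' Icc 0 1 = Icc 0 1)
    (e : ℝ → ℝ) (he : ∀ x, 0 ≤ e x) :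
    ∫⁻ t in Icc (0:ℝ) 1, ENNReal.ofReal (e (φ t) * d t) =
      ∫⁻ x in Icc (0:ℝ) 1, ENNReal.ofReal (e x) := by
  have h := lintegral_image_eq_lintegral_abs_det_fderiv_mul volume measurableSet_Icc
    (f' := fun x => ContinuousLinearMap.smulRight (1 : ℝ →L[ℝ] ℝ) (d x))
    (fun x _ => (hd x).hasFDerivAt.hasFDerivWithinAt) hinj (fun x => ENNReal.ofReal (e x))
  rw [him] at h
  rw [h]
  apply setLIntegral_congr_fun measurableSet_Icc
  intro x _
  dsimp only
  rw [ContinuousLinearMap.smulRight_one_eq_toSpanSingleton, ContinuousLinearMap.det_toSpanSingleton, abs_of_nonneg (hpos x), ← ENNReal.ofReal_mul (hpos x), mul_comm]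

theorem approx_poly (f : ℝ → ℝ) (hf : Measurable f) (hfn : ∀ x ∈ Icc (0:ℝ) 1, 0 ≤ f x)
    (hfin : ∫⁻ x in Icc (0:ℝ) 1, ENNReal.ofReal (f x) ≠ ⊤) (δ : ℝ) (hδ : 0 < δ) :
    ∃ q : ℝ[X], (∀ x, δ ≤ q.eval x) ∧
      (∫⁻ x in Icc (0:ℝ) 1, ENNReal.ofReal (f x - q.eval x) ≤ ENNReal.ofReal δ) ∧
      ENNReal.ofReal (∫ x in (0:ℝ)..1, q.eval x) ≤
        (∫⁻ x in Icc (0:ℝ) 1, ENNReal.ofReal (f x)) + ENNReal.ofReal (4*δ) := by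
  set I : ℝ≥0∞ := ∫⁻ x in Icc (0:ℝ) 1, ENNReal.ofReal (f x) with hI
  set fI : ℝ → ℝ := (Icc (0:ℝ) 1).indicator f with hfI
  have hfI_meas : Measurable fI := hf.indicator measurableSet_Icc
  have hfI_nonneg : ∀ x, 0 ≤ fI x := by
    intro x
    by_cases hx : x ∈ Icc (0:ℝ) 1
    · simp [hfI, indicator_of_mem hx, hfn x hx]
    · simp [hfI, indicator_of_notMem hx]
  have hnn_eq : ∫⁻ x, (‖fI x‖₊ : ℝ≥0∞) = I := by
    have : (fun x => (‖fI x‖₊ : ℝ≥0∞)) =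
        (Icc (0:ℝ) 1).indicator (fun x => (‖f x‖₊ : ℝ≥0∞)) := by
      ext x
      by_cases hx : x ∈ Icc (0:ℝ) 1 <;>
        simp [hfI, indicator_of_mem, indicator_of_notMem, hx]
    rw [this, lintegral_indicator measurableSet_Icc]
    apply setLIntegral_congr_fun measurableSet_Icc
    intro x hx
    exact Real.enorm_eq_ofReal (hfn x hx)
  have hfI_int : Integrable fI := by
    refine ⟨hfI_meas.aestronglyMeasurable, ?_⟩
    rw [HasFiniteIntegral]; change ∫⁻ x, (‖fI x‖₊ : ℝ≥0∞) < ⊤; rw [hnn_eq]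
    exact lt_top_iff_ne_top.2 hfin
  have hmem : MemLp fI 1 volume := (memLp_one_iff_integrable).2 hfI_int
  obtain ⟨g, -, hg1, gcont, -⟩ := hmem.exists_hasCompactSupport_eLpNorm_sub_le
    (ENNReal.one_ne_top) (ε := ENNReal.ofReal δ)
    (by simp [ENNReal.ofReal_eq_zero, not_le, hδ])
  set h : ℝ → ℝ := fun x => max (g x) 0 with hh
  have hcont : Continuous h := gcont.max continuous_const
  have hnonneg : ∀ x, 0 ≤ h x := fun x => le_max_right _ _
  have hL1 : ∫⁻ x, (‖fI x - h x‖₊ : ℝ≥0∞) ≤ ENNReal.ofReal δ := by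
    refine le_trans (lintegral_mono fun x => ?_) (by
      rwa [eLpNorm_one_eq_lintegral_enorm] at hg1)
    simp only [enorm_eq_nnnorm, ENNReal.coe_le_coe, ← NNReal.coe_le_coe, coe_nnnorm, Real.norm_eq_abs,
      Pi.sub_apply]
    calc |fI x - h x| = |max (fI x) 0 - max (g x) 0| := by rw [max_eq_left (hfI_nonneg x)]
    _ ≤ |fI x - g x| := abs_max_sub_max_le_abs _ _ _
  -- Weierstrass approximation of sqrt (h + δ)
  set s : ℝ → ℝ := fun x => Real.sqrt (h x + δ) with hs
  have hscont : Continuous s := (hcont.add continuous_const).sqrt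
  obtain ⟨B, hB⟩ := (isCompact_Icc (a := (0:ℝ)) (b := 1)).exists_bound_of_continuousOn
    hscont.continuousOn
  have hBnn : 0 ≤ B := le_trans (norm_nonneg _) (hB 0 (by simp))
  set η : ℝ := min 1 (δ / (2 * B + 1)) with hη
  have hηpos : 0 < η := lt_min one_pos (div_pos hδ (by linarith))
  obtain ⟨r, hr⟩ := exists_polynomial_near_of_continuousOn 0 1 s hscont.continuousOn η hηpos
  set q : ℝ[X] := r * r + C δ with hq
  have hqeval : ∀ x, q.eval x = (r.eval x) ^ 2 + δ := by
    intro x; simp [hq, sq]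
  have hqlb : ∀ x, δ ≤ q.eval x := by
    intro x; rw [hqeval]; nlinarith [sq_nonneg (r.eval x)]
  -- on Icc : h x ≤ q.eval x ≤ h x + 3δ
  have hsq : ∀ x ∈ Icc (0:ℝ) 1, s x ^ 2 = h x + δ := fun x _ =>
    Real.sq_sqrt (by linarith [hnonneg x])
  have hclose : ∀ x ∈ Icc (0:ℝ) 1, |r.eval x ^ 2 - s x ^ 2| ≤ δ := by
    intro x hx
    have h1 : |r.eval x - s x| ≤ η := le_of_lt (hr x hx)
    have h2 : |s x| ≤ B := by
      have := hB x hx; rwa [Real.norm_eq_abs] at this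
    have h3 : |r.eval x + s x| ≤ 2 * B + η := by
      have : |r.eval x| ≤ B + η := by
        calc |r.eval x| ≤ |r.eval x - s x| + |s x| := by
              have := abs_add_le (r.eval x - s x) (s x); simpa using this
        _ ≤ η + B := by linarith
        _ = B + η := by ring
      calc |r.eval x + s x| ≤ |r.eval x| + |s x| := abs_add_le _ _
      _ ≤ 2 * B + η := by linarith
    calc |r.eval x ^ 2 - s x ^ 2| = |r.eval x - s x| * |r.eval x + s x| := by
          rw [← abs_mul]; ring_nf
    _ ≤ η * (2 * B + η) := by
          exact mul_le_mul h1 h3 (abs_nonneg _) hηpos.le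
    _ ≤ δ := by
          have h4 : η ≤ 1 := min_le_left _ _
          have h5 : η ≤ δ / (2 * B + 1) := min_le_right _ _
          have : η * (2 * B + η) ≤ η * (2 * B + 1) := by nlinarith
          calc η * (2 * B + η) ≤ η * (2 * B + 1) := this
          _ ≤ δ / (2 * B + 1) * (2 * B + 1) := by nlinarith
          _ = δ := by field_simp
  have hq_ge_h : ∀ x ∈ Icc (0:ℝ) 1, h x ≤ q.eval x := by
    intro x hx
    have := hclose x hx
    have h1 := hsq x hx
    rw [hqeval]
    have := abs_le.1 this
    nlinarith [this.1]
  have hq_le : ∀ x ∈ Icc (0:ℝ) 1, q.eval x ≤ h x + 3 * δ := by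
    intro x hx
    have := abs_le.1 (hclose x hx)
    have h1 := hsq x hx
    rw [hqeval]
    nlinarith [this.2]
  refine ⟨q, hqlb, ?_, ?_⟩
  · -- small error lintegral
    calc ∫⁻ x in Icc (0:ℝ) 1, ENNReal.ofReal (f x - q.eval x)
        ≤ ∫⁻ x in Icc (0:ℝ) 1, (‖fI x - h x‖₊ : ℝ≥0∞) := by
          apply setLIntegral_mono' measurableSet_Icc
          intro x hx
          have h1 : f x - q.eval x ≤ |fI x - h x| := by
            have : fI x = f x := indicator_of_mem hx f
            have h2 := hq_ge_h x hx
            calc f x - q.eval x ≤ f x - h x := by linarith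
            _ = fI x - h x := by rw [this]
            _ ≤ |fI x - h x| := le_abs_self _
          calc ENNReal.ofReal (f x - q.eval x) ≤ ENNReal.ofReal |fI x - h x| :=
                ENNReal.ofReal_le_ofReal h1
          _ = (‖fI x - h x‖₊ : ℝ≥0∞) := (Real.enorm_eq_ofReal_abs _).symm
    _ ≤ ∫⁻ x, (‖fI x - h x‖₊ : ℝ≥0∞) := setLIntegral_le_lintegral _ _
    _ ≤ ENNReal.ofReal δ := hL1
  · -- integral bound
    have hqint : ∫ x in (0:ℝ)..1, q.eval x ≤ (∫ x in (0:ℝ)..1, h x) + 3 * δ := by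
      have : ∫ x in (0:ℝ)..1, q.eval x ≤ ∫ x in (0:ℝ)..1, (h x + 3 * δ) :=
        intervalIntegral.integral_mono_on zero_le_one
          ((q.continuous_aeval).intervalIntegrable 0 1)
          ((hcont.add continuous_const).intervalIntegrable 0 1)
          (fun x hx => hq_le x hx)
      rwa [intervalIntegral.integral_add (hcont.intervalIntegrable 0 1)
        (intervalIntegrable_const), intervalIntegral.integral_const, smul_eq_mul,
        sub_zero, one_mul] at this
    have hhint : ENNReal.ofReal (∫ x in (0:ℝ)..1, h x) ≤ I + ENNReal.ofReal δ := by
      have he1 : ∫ x in (0:ℝ)..1, h x = ∫ x in Icc (0:ℝ) 1, h x := by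
        rw [intervalIntegral.integral_of_le zero_le_one, integral_Icc_eq_integral_Ioc]
      rw [he1, ofReal_integral_eq_lintegral_ofReal
        (hcont.integrableOn_Icc) (Filter.Eventually.of_forall fun x => hnonneg x)]
      calc ∫⁻ x in Icc (0:ℝ) 1, ENNReal.ofReal (h x)
          ≤ ∫⁻ x in Icc (0:ℝ) 1, (ENNReal.ofReal (f x) + (‖fI x - h x‖₊ : ℝ≥0∞)) := by
            apply setLIntegral_mono' measurableSet_Icc
            intro x hx
            have hfx : fI x = f x := indicator_of_mem hx f
            have : h x ≤ f x + |fI x - h x| := by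
              have h2 := neg_abs_le (fI x - h x)
              calc h x ≤ fI x + |fI x - h x| := by linarith
              _ = f x + |fI x - h x| := by rw [hfx]
            calc ENNReal.ofReal (h x) ≤ ENNReal.ofReal (f x + |fI x - h x|) :=
                  ENNReal.ofReal_le_ofReal this
            _ ≤ ENNReal.ofReal (f x) + ENNReal.ofReal |fI x - h x| := ENNReal.ofReal_add_le
            _ = ENNReal.ofReal (f x) + (‖fI x - h x‖₊ : ℝ≥0∞) := by
                  exact congrArg _ (Real.enorm_eq_ofReal_abs _).symm
      _ = I + ∫⁻ x in Icc (0:ℝ) 1, (‖fI x - h x‖₊ : ℝ≥0∞) := by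
            rw [lintegral_add_left hf.ennreal_ofReal]
      _ ≤ I + ENNReal.ofReal δ := by
            gcongr
            exact le_trans (setLIntegral_le_lintegral _ _) hL1
    calc ENNReal.ofReal (∫ x in (0:ℝ)..1, q.eval x)
        ≤ ENNReal.ofReal ((∫ x in (0:ℝ)..1, h x) + 3 * δ) := ENNReal.ofReal_le_ofReal hqint
    _ ≤ ENNReal.ofReal (∫ x in (0:ℝ)..1, h x) + ENNReal.ofReal (3 * δ) := ENNReal.ofReal_add_le
    _ ≤ I + ENNReal.ofReal δ + ENNReal.ofReal (3 * δ) := by gcongr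
    _ ≤ I + ENNReal.ofReal (4 * δ) := by
          rw [add_assoc, ← ENNReal.ofReal_add (by linarith) (by linarith)]
          gcongr
          linarith

theorem ofReal_max_zero (a : ℝ) : ENNReal.ofReal (max a 0) = ENNReal.ofReal a := by
  rcases le_total a 0 with h | h
  · rw [max_eq_right h, ENNReal.ofReal_zero, ENNReal.ofReal_of_nonpos h]
  · rw [max_eq_left h]

/-- time reparametrization lemma. Given measurable functions
`f₁, …, f_N : [0,1] → [0,∞)` and `ε > 0`, there exist orientation-preserving
diffeomorphisms `φ₁, …, φ_N` of `[0,1]` such that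
`∫₀¹ maxᵢ (fᵢ(φᵢ(t))·φᵢ'(t)) dt ≤ maxᵢ ∫₀¹ fᵢ + ε`, the integrals being Lebesgue integrals
with values in `[0,∞]`. -/
theorem statement6 (N : ℕ) (hN : 0 < N) (f : Fin N → ℝ → ℝ)
    (hmeas : ∀ i, Measurable (f i))
    (hnonneg : ∀ (i : Fin N), ∀ t ∈ Set.Icc (0:ℝ) 1, 0 ≤ f i t)
    (ε : ℝ) (hε : 0 < ε) :
    ∃ φ : Fin N → ℝ → ℝ, (∀ i, IsDiffeoI (φ i)) ∧
      (∫⁻ t in Set.Icc (0:ℝ) 1, ⨆ i, ENNReal.ofReal (f i (φ i t) * deriv (φ i) t)) ≤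
        (⨆ i, ∫⁻ t in Set.Icc (0:ℝ) 1, ENNReal.ofReal (f i t)) + ENNReal.ofReal ε := by
  haveI : NeZero N := ⟨hN.ne'⟩
  set I : Fin N → ℝ≥0∞ := fun i => ∫⁻ t in Set.Icc (0:ℝ) 1, ENNReal.ofReal (f i t) with hIdef
  by_cases htop : ∃ i, I i = ⊤
  · obtain ⟨i, hi⟩ := htop
    have hS : (⨆ i, I i) = ⊤ := top_unique (hi ▸ le_iSup I i)
    refine ⟨fun _ => id, fun _ => ⟨contDiff_id, rfl, rfl, fun t _ => by simp⟩, ?_⟩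
    rw [hIdef] at hS
    rw [hS]
    simp
  push_neg at htop
  set S : ℝ≥0∞ := ⨆ i, I i with hSdef
  have hSne : S ≠ ⊤ := by
    have : S ≤ ∑ i, I i := iSup_le fun i => Finset.single_le_sum
      (f := I) (fun j _ => zero_le) (Finset.mem_univ i)
    exact ne_top_of_le_ne_top (ENNReal.sum_lt_top.2 fun i _ =>
      lt_top_iff_ne_top.2 (htop i)).ne this
  set M : ℝ := S.toReal with hMdef
  have hMS : ENNReal.ofReal M = S := ENNReal.ofReal_toReal hSne
  have hMnn : 0 ≤ M := ENNReal.toReal_nonneg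
  set δ : ℝ := ε / (N + 5) with hδdef
  have hδpos : 0 < δ := div_pos hε (by positivity)
  -- polynomials
  choose q hqlb hqerr hqint using fun i =>
    approx_poly (f i) (hmeas i) (hnonneg i) (htop i) δ hδpos
  -- diffeos
  choose φ hdiff hmono him hder hderiv using fun i => key_diffeo (q i) δ hδpos (hqlb i)
  set T : Fin N → ℝ := fun i => ∫ x in (0:ℝ)..1, (q i).eval x with hTdef
  have hqpos : ∀ i x, 0 < (q i).eval x := fun i x => lt_of_lt_of_le hδpos (hqlb i x)
  have hTnn : ∀ i, 0 ≤ T i := fun i =>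
    intervalIntegral.integral_nonneg zero_le_one (fun x _ => (hqpos i x).le)
  have hTle : ∀ i, T i ≤ M + 4 * δ := by
    intro i
    have h1 : ENNReal.ofReal (T i) ≤ S + ENNReal.ofReal (4 * δ) :=
      le_trans (hqint i) (by gcongr; exact le_iSup I i)
    rw [← hMS, ← ENNReal.ofReal_add hMnn (by linarith)] at h1
    exact (ENNReal.ofReal_le_ofReal_iff (by linarith)).1 h1
  set e : Fin N → ℝ → ℝ := fun i x => max (f i x - (q i).eval x) 0 with hedef
  have hepos : ∀ i x, 0 ≤ e i x := fun i x => le_max_right _ _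
  have hemeas : ∀ i, Measurable (e i) := fun i =>
    ((hmeas i).sub ((q i).continuous_aeval).measurable).max measurable_const
  have hdnn : ∀ i t, 0 ≤ T i / (q i).eval (φ i t) := fun i t =>
    div_nonneg (hTnn i) (hqpos i _).le
  -- pointwise bound
  have hpt : ∀ t, (⨆ i, ENNReal.ofReal (f i (φ i t) * deriv (φ i) t)) ≤
      ENNReal.ofReal (M + 4 * δ) +
        ∑ j, ENNReal.ofReal (e j (φ j t) * deriv (φ j) t) := by
    intro t
    refine iSup_le fun i => ?_
    have hx : f i (φ i t) * deriv (φ i) t ≤ (M + 4 * δ) + e i (φ i t) * deriv (φ i) t := by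
      rw [hderiv i t]
      set x := φ i t
      have hqx := hqpos i x
      have : f i x ≤ (q i).eval x + e i x := by
        simp only [hedef]
        rcases le_total (f i x - (q i).eval x) 0 with h | h
        · rw [max_eq_right h]; linarith
        · rw [max_eq_left h]; linarith
      have h2 : f i x * (T i / (q i).eval x) ≤
          ((q i).eval x + e i x) * (T i / (q i).eval x) :=
        mul_le_mul_of_nonneg_right this (hdnn i t)
      have h3 : (q i).eval x * (T i / (q i).eval x) = T i := by
        field_simp
      calc f i x * (T i / (q i).eval x) ≤ (q i).eval x * (T i / (q i).eval x)
            + e i x * (T i / (q i).eval x) := by rw [← add_mul]; exact h2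
      _ = T i + e i x * (T i / (q i).eval x) := by rw [h3]
      _ ≤ (M + 4 * δ) + e i x * (T i / (q i).eval x) := by
            have := hTle i; gcongr
    calc ENNReal.ofReal (f i (φ i t) * deriv (φ i) t)
        ≤ ENNReal.ofReal ((M + 4 * δ) + e i (φ i t) * deriv (φ i) t) :=
          ENNReal.ofReal_le_ofReal hx
    _ ≤ ENNReal.ofReal (M + 4 * δ) + ENNReal.ofReal (e i (φ i t) * deriv (φ i) t) :=
          ENNReal.ofReal_add_le
    _ ≤ ENNReal.ofReal (M + 4 * δ) + ∑ j, ENNReal.ofReal (e j (φ j t) * deriv (φ j) t) := by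
          gcongr
          exact Finset.single_le_sum (f := fun j =>
            ENNReal.ofReal (e j (φ j t) * deriv (φ j) t)) (fun j _ => zero_le)
            (Finset.mem_univ i)
  -- measurability of error integrands
  have hGmeas : ∀ j, Measurable fun t => ENNReal.ofReal (e j (φ j t) * deriv (φ j) t) := by
    intro j
    have heq : (fun t => ENNReal.ofReal (e j (φ j t) * deriv (φ j) t)) =
        fun t => ENNReal.ofReal (e j (φ j t) * (T j / (q j).eval (φ j t))) := by
      ext t; rw [hderiv j t]
    rw [heq]
    apply ENNReal.measurable_ofReal.comp
    exact ((hemeas j).comp ((hdiff j).1.continuous.measurable)).mul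
      (measurable_const.div
        (((q j).continuous_aeval.comp (hdiff j).1.continuous).measurable))
  -- integrate
  refine ⟨φ, hdiff, ?_⟩
  calc ∫⁻ t in Set.Icc (0:ℝ) 1, ⨆ i, ENNReal.ofReal (f i (φ i t) * deriv (φ i) t)
      ≤ ∫⁻ t in Set.Icc (0:ℝ) 1, (ENNReal.ofReal (M + 4 * δ) +
          ∑ j, ENNReal.ofReal (e j (φ j t) * deriv (φ j) t)) :=
        lintegral_mono hpt
  _ = ENNReal.ofReal (M + 4 * δ) * volume (Icc (0:ℝ) 1) +
        ∑ j, ∫⁻ t in Set.Icc (0:ℝ) 1, ENNReal.ofReal (e j (φ j t) * deriv (φ j) t) := by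
        rw [lintegral_add_left measurable_const, setLIntegral_const,
          lintegral_finset_sum _ (fun j _ => hGmeas j)]
  _ = ENNReal.ofReal (M + 4 * δ) +
        ∑ j, ∫⁻ t in Set.Icc (0:ℝ) 1, ENNReal.ofReal (e j (φ j t) * deriv (φ j) t) := by
        rw [Real.volume_Icc]
        norm_num
  _ ≤ ENNReal.ofReal (M + 4 * δ) + ∑ _j : Fin N, ENNReal.ofReal δ := by
        gcongr with j hj
        have hc : ∀ t, deriv (φ j) t = T j / (q j).eval (φ j t) := hderiv j
        have : (fun t => ENNReal.ofReal (e j (φ j t) * deriv (φ j) t)) =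
            fun t => ENNReal.ofReal (e j (φ j t) * (T j / (q j).eval (φ j t))) := by
          ext t; rw [hc t]
        rw [show (∫⁻ t in Set.Icc (0:ℝ) 1, ENNReal.ofReal (e j (φ j t) * deriv (φ j) t))
            = ∫⁻ t in Set.Icc (0:ℝ) 1,
              ENNReal.ofReal (e j (φ j t) * (T j / (q j).eval (φ j t))) from by rw [this]]
        rw [cov_lemma (φ j) (fun t => T j / (q j).eval (φ j t))
          (fun t => hder j t) (fun t => hdnn j t) ((hmono j).injective.injOn) (him j) (e j) (hepos j)]
        calc ∫⁻ x in Icc (0:ℝ) 1, ENNReal.ofReal (e j x)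
            = ∫⁻ x in Icc (0:ℝ) 1, ENNReal.ofReal (f j x - (q j).eval x) := by
              apply lintegral_congr
              intro x
              exact ofReal_max_zero _
        _ ≤ ENNReal.ofReal δ := hqerr j
  _ = ENNReal.ofReal (M + 4 * δ) + (N : ℝ≥0∞) * ENNReal.ofReal δ := by
        rw [Finset.sum_const, Finset.card_univ, Fintype.card_fin, nsmul_eq_mul]
  _ ≤ S + ENNReal.ofReal ε := by
        rw [← hMS]
        have h2 : (N : ℝ≥0∞) * ENNReal.ofReal δ = ENNReal.ofReal (N * δ) := by
          rw [ENNReal.ofReal_mul (by positivity : (0:ℝ) ≤ (N:ℝ)), ENNReal.ofReal_natCast]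
        calc ENNReal.ofReal (M + 4*δ) + (N : ℝ≥0∞) * ENNReal.ofReal δ
            ≤ ENNReal.ofReal M + ENNReal.ofReal (4*δ) + ENNReal.ofReal (N*δ) := by
              rw [h2]; gcongr; exact ENNReal.ofReal_add_le
        _ = ENNReal.ofReal M + ENNReal.ofReal (4*δ + N*δ) := by
              rw [add_assoc, ← ENNReal.ofReal_add (by positivity) (by positivity)]
        _ ≤ ENNReal.ofReal M + ENNReal.ofReal ε := by
              gcongr
              have heq4 : (4 : ℝ) * δ + N * δ = (N + 4) * δ := by ring
              rw [heq4, hδdef, ← mul_div_assoc]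
              have h5 : (0:ℝ) < (N:ℝ) + 5 := by positivity
              rw [div_le_iff₀ h5]
              nlinarith

end
end

section
/- Let f : [0,1] → [0,∞) be Lebesgue integrable and let ε > 0. Then there exists an orientation-preserving diffeomorphism φ of [0,1] such that, defining f̃(t) := f(φ(t))·φ'(t) and X̃ := { t ∈ [0,1] : f̃(t) > ∫₀¹ f(s) ds + 2ε }, one has ∫_{X̃} f̃(t) dt ≤ ε. -/
open MeasureTheory Function Set

noncomputable section

section AuxiliaryLemmas

open Polynomial

lemma exists_antideriv (r : ℝ[X]) : ∃ P : ℝ[X], P.derivative = r ∧ P.eval 0 = 0 := by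
  refine ⟨r.sum fun n a => C (a / (n + 1)) * X ^ (n + 1), ?_, ?_⟩
  · rw [Polynomial.sum_def, map_sum]
    have h : ∀ n ∈ r.support,
        Polynomial.derivative (C (r.coeff n / (n + 1)) * X ^ (n + 1))
          = C (r.coeff n) * X ^ n := by
      intro n _
      rw [Polynomial.derivative_C_mul_X_pow]
      have hne : ((n : ℝ) + 1) ≠ 0 := by positivity
      push_cast
      rw [div_mul_cancel₀ _ hne]
    rw [Finset.sum_congr rfl h]
    conv_rhs => rw [← Polynomial.sum_C_mul_X_pow_eq r]
    rw [Polynomial.sum_def]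
  · rw [Polynomial.sum_def, Polynomial.eval_finset_sum]
    simp

section Construction

open scoped ContDiff

variable (R : ℝ[X]) (δ : ℝ)

lemma exists_diffeo (hδ : 0 < δ) (hR : ∀ x : ℝ, δ ≤ R.eval x) :
    ∃ (φ ψ : ℝ → ℝ) (J : ℝ),
      (J = ∫ x in Set.Icc (0:ℝ) 1, R.eval x) ∧ 0 < J ∧
      ContDiff ℝ (⊤ : ℕ∞) φ ∧ Continuous ψ ∧ Continuous φ ∧
      (∀ s, φ (ψ s) = s) ∧ (∀ t, ψ (φ t) = t) ∧
      (∀ t, HasDerivAt ψ (R.eval t / J) t) ∧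
      (∀ t, HasDerivAt φ (J / R.eval (φ t)) t) ∧
      φ 0 = 0 ∧ φ 1 = 1 ∧ Monotone φ ∧ Monotone ψ ∧ ψ 0 = 0 ∧ ψ 1 = 1 := by
  obtain ⟨P, hPd, hP0⟩ := exists_antideriv R
  set J := P.eval 1 with hJdef
  have hRc : Continuous fun x : ℝ => R.eval x := R.continuous
  have hψd0 : ∀ t : ℝ, HasDerivAt (fun x => P.eval x) (R.eval t) t := by
    intro t; simpa [hPd] using P.hasDerivAt t
  have hJint : J = ∫ x in Set.Icc (0:ℝ) 1, R.eval x := by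
    have h1 : ∫ x in (0:ℝ)..1, R.eval x = P.eval 1 - P.eval 0 :=
      intervalIntegral.integral_eq_sub_of_hasDerivAt (fun t _ => hψd0 t)
        (hRc.intervalIntegrable 0 1)
    rw [intervalIntegral.integral_of_le zero_le_one, ← integral_Icc_eq_integral_Ioc] at h1
    rw [hP0, sub_zero] at h1
    exact h1.symm
  have hJpos : 0 < J := by
    have h1 : (δ : ℝ) * 1 ≤ ∫ x in Set.Icc (0:ℝ) 1, R.eval x := by
      have := setIntegral_mono (μ := volume) (s := Set.Icc (0:ℝ) 1)
        (f := fun _ => δ) (g := fun x => R.eval x)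
        (integrableOn_const (by simp [Real.volume_Icc]))
        (hRc.integrableOn_Icc) hR
      simpa [Real.volume_Icc] using this
    rw [hJint]; nlinarith
  have hψd : ∀ t : ℝ, HasDerivAt (fun x => P.eval x / J) (R.eval t / J) t :=
    fun t => (hψd0 t).div_const J
  set ψ : ℝ → ℝ := fun x => P.eval x / J with hψdef
  have hψan : ContDiff ℝ (⊤ : ℕ∞) ψ := by
    refine ContDiff.of_le (n := ω) ?_ le_top
    rw [contDiff_omega_iff_analyticOnNhd]
    exact (AnalyticOnNhd.eval_polynomial P).div analyticOnNhd_const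
      (fun x _ => hJpos.ne')
  have hψmono : StrictMono ψ := by
    refine strictMono_of_deriv_pos fun t => ?_
    rw [(hψd t).deriv]
    have h1 : (0:ℝ) < R.eval t := lt_of_lt_of_le hδ (hR t)
    positivity
  have hc : Continuous ψ := hψan.continuous
  -- lower bound : ψ t - δ/J * t is monotone
  have hdiff : ∀ t : ℝ, HasDerivAt (fun t => ψ t - δ / J * t) (R.eval t / J - δ / J * 1) t :=
    fun t => (hψd t).sub ((hasDerivAt_id t).const_mul (δ / J))
  have haux : Monotone fun t => ψ t - δ / J * t := by
    refine monotone_of_deriv_nonneg (fun t => (hdiff t).differentiableAt) fun t => ?_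
    rw [(hdiff t).deriv]
    have h1 : δ / J ≤ R.eval t / J := by
      have := hR t; gcongr
    linarith
  have hbound : ∀ s t : ℝ, s ≤ t → ψ s + δ / J * (t - s) ≤ ψ t := by
    intro s t hst
    have := haux hst
    simp only [] at this
    nlinarith [this]
  have hδJ : 0 < δ / J := div_pos hδ hJpos
  have hsurj : Surjective ψ := by
    refine hc.surjective ?_ ?_
    · have h : ∀ᶠ t in Filter.atTop, ψ 0 + δ / J * t ≤ ψ t := by
        filter_upwards [Filter.eventually_ge_atTop 0] with t ht
        simpa using hbound 0 t ht
      refine Filter.tendsto_atTop_mono' _ h ?_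
      exact Filter.tendsto_atTop_add_const_left _ _
        (Filter.Tendsto.const_mul_atTop hδJ Filter.tendsto_id)
    · have h : ∀ᶠ t in Filter.atBot, ψ t ≤ ψ 0 + δ / J * t := by
        filter_upwards [Filter.eventually_le_atBot 0] with t ht
        have := hbound t 0 ht
        nlinarith [this]
      refine Filter.tendsto_atBot_mono' _ h ?_
      exact Filter.tendsto_atBot_add_const_left _ _
        (Filter.Tendsto.const_mul_atBot hδJ Filter.tendsto_id)
  set e : ℝ ≃o ℝ := StrictMono.orderIsoOfSurjective ψ hψmono hsurj with hedef
  set H : ℝ ≃ₜ ℝ := e.toHomeomorph with hHdef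
  have hHcoe : ⇑H = ψ := rfl
  set φ : ℝ → ℝ := ⇑H.symm with hφdef
  have hφψ : ∀ s, φ (ψ s) = s := fun s => H.symm_apply_apply s
  have hψφ : ∀ t, ψ (φ t) = t := fun t => H.apply_symm_apply t
  have hRpos : ∀ x : ℝ, (0:ℝ) < R.eval x := fun x => lt_of_lt_of_le hδ (hR x)
  have hφC : ContDiff ℝ (⊤ : ℕ∞) φ :=
    H.contDiff_symm_deriv (f' := fun t => R.eval t / J)
      (fun x => by have := hRpos x; positivity) hψd hψan
  have hφd : ∀ t, HasDerivAt φ (J / R.eval (φ t)) t := by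
    intro t
    have h := H.toOpenPartialHomeomorph.hasDerivAt_symm (trivial)
      (f' := R.eval (φ t) / J) (by have := hRpos (φ t); positivity) (hψd (φ t))
    rw [inv_div] at h
    exact h
  have hψ0 : ψ 0 = 0 := by simp [hψdef, hP0]
  have hψ1 : ψ 1 = 1 := by
    simp only [hψdef]
    exact div_self hJpos.ne'
  have hφ0 : φ 0 = 0 := by have := hφψ 0; rwa [hψ0] at this
  have hφ1 : φ 1 = 1 := by have := hφψ 1; rwa [hψ1] at this
  exact ⟨φ, ψ, J, hJint, hJpos, hφC, hc, H.symm.continuous, hφψ, hψφ, hψd, hφd, hφ0, hφ1,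
    (e.symm.monotone : Monotone φ), hψmono.monotone, hψ0, hψ1⟩

end Construction


set_option maxHeartbeats 1000000 in
/-- Any nonnegative integrable `f : [0,1] → [0,∞)` can be reparametrized by
an orientation-preserving diffeomorphism `φ` of `[0,1]` so that `f̃(t) := f(φ(t))·φ'(t)`
exceeds `∫₀¹ f + 2ε` only on a set `X̃` with `∫_{X̃} f̃ ≤ ε`. -/
theorem statement7 (f : ℝ → ℝ) (hf : IntegrableOn f (Set.Icc (0:ℝ) 1))
    (hnonneg : ∀ t ∈ Set.Icc (0:ℝ) 1, 0 ≤ f t) (ε : ℝ) (hε : 0 < ε) :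
    ∃ φ : ℝ → ℝ, IsDiffeoI φ ∧
      (∫ t in {t ∈ Set.Icc (0:ℝ) 1 |
          f (φ t) * deriv φ t > (∫ s in Set.Icc (0:ℝ) 1, f s) + 2 * ε},
        f (φ t) * deriv φ t) ≤ ε := by
  set I := ∫ s in Set.Icc (0:ℝ) 1, f s with hIdef
  have hI0 : 0 ≤ I := setIntegral_nonneg measurableSet_Icc hnonneg
  set c := I + 2 * ε with hcdef
  have hcpos : 0 < c := by positivity
  set η := ε ^ 2 / (2 * c) with hηdef
  have hηpos : 0 < η := by positivity
  have hηε : η ≤ ε / 4 := by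
    rw [hηdef, div_le_div_iff₀ (by positivity) (by norm_num)]
    nlinarith
  -- measurable representative
  have hsm := hf.1
  set f₀ : ℝ → ℝ := fun x => max (hsm.mk f x) 0 with hf₀def
  have hf₀m : Measurable f₀ := hsm.stronglyMeasurable_mk.measurable.max measurable_const
  have hf₀nn : ∀ x, 0 ≤ f₀ x := fun x => le_max_right _ _
  have hfae : f =ᵐ[volume.restrict (Set.Icc (0:ℝ) 1)] f₀ := by
    filter_upwards [hsm.ae_eq_mk, ae_restrict_mem measurableSet_Icc] with x hx hxI
    rw [hf₀def]
    simp only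
    rw [← hx, max_eq_left (hnonneg x hxI)]
  have hIeq : ∫ s in Set.Icc (0:ℝ) 1, f₀ s = I := (integral_congr_ae hfae).symm
  have hf₀int : IntegrableOn f₀ (Set.Icc (0:ℝ) 1) := hf.congr hfae
  have hEnull : volume ({x | f x ≠ f₀ x} ∩ Set.Icc (0:ℝ) 1) = 0 := by
    have h := hfae
    rw [Filter.EventuallyEq, ae_iff] at h
    rw [← Measure.restrict_apply' measurableSet_Icc]
    exact h
  set N := toMeasurable volume ({x | f x ≠ f₀ x} ∩ Set.Icc (0:ℝ) 1) with hNdef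
  have hNmeas : MeasurableSet N := measurableSet_toMeasurable _ _
  have hNnull : volume N = 0 := by rw [hNdef, measure_toMeasurable]; exact hEnull
  have hKey : ∀ x ∈ Set.Icc (0:ℝ) 1, x ∉ N → f x = f₀ x := by
    intro x hx hxn
    by_contra hne
    exact hxn (subset_toMeasurable _ _ ⟨hne, hx⟩)
  -- continuous approximation
  have hFint : Integrable ((Set.Icc (0:ℝ) 1).indicator f₀) volume :=
    (integrable_indicator_iff measurableSet_Icc).2 hf₀int
  obtain ⟨u, hucomp, huL1, hucont, huint⟩ :=
    hFint.exists_hasCompactSupport_integral_sub_le (show (0:ℝ) < η / 4 by positivity)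
  set v : ℝ → ℝ := fun x => max (u x) 0 with hvdef
  have hvcont : Continuous v := hucont.max continuous_const
  have hvnn : ∀ x, 0 ≤ v x := fun x => le_max_right _ _
  have hv1 : ∫ x in Set.Icc (0:ℝ) 1, |f₀ x - v x| ≤ η / 4 := by
    have hpt : ∀ x ∈ Set.Icc (0:ℝ) 1,
        |f₀ x - v x| ≤ ‖(Set.Icc (0:ℝ) 1).indicator f₀ x - u x‖ := by
      intro x hx
      rw [Set.indicator_of_mem hx, Real.norm_eq_abs]
      rcases le_total 0 (u x) with h | h
      · rw [hvdef]; simp only [max_eq_left h]; exact le_refl _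
      · rw [hvdef]
        simp only [max_eq_right h]
        rw [sub_zero, abs_of_nonneg (hf₀nn x), abs_of_nonneg (by linarith [hf₀nn x])]
        linarith
    calc ∫ x in Set.Icc (0:ℝ) 1, |f₀ x - v x|
        ≤ ∫ x in Set.Icc (0:ℝ) 1, ‖(Set.Icc (0:ℝ) 1).indicator f₀ x - u x‖ :=
          setIntegral_mono_on ((hf₀int.sub (hvcont.integrableOn_Icc)).abs)
            ((hFint.sub huint).norm.integrableOn) measurableSet_Icc hpt
      _ ≤ ∫ x, ‖(Set.Icc (0:ℝ) 1).indicator f₀ x - u x‖ :=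
          setIntegral_le_integral (hFint.sub huint).norm
            (Filter.Eventually.of_forall fun x => norm_nonneg _)
      _ ≤ η / 4 := huL1
  -- Weierstrass
  set w : ℝ → ℝ := fun x => Real.sqrt (v x) with hwdef
  have hwcont : Continuous w := Real.continuous_sqrt.comp hvcont
  obtain ⟨B, hB⟩ :=
    (isCompact_Icc (a := (0:ℝ)) (b := 1)).exists_bound_of_continuousOn hwcont.continuousOn
  have hB0 : 0 ≤ B := le_trans (norm_nonneg (w 0)) (hB 0 (by constructor <;> norm_num))
  set θ := min 1 (η / (4 * (2 * B + 1))) with hθdef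
  have hθpos : 0 < θ := lt_min one_pos (by positivity)
  have hθ1 : θ ≤ 1 := min_le_left _ _
  obtain ⟨q, hq⟩ :=
    exists_polynomial_near_of_continuousOn 0 1 w hwcont.continuousOn θ hθpos
  set δ' := η / 4 with hδ'def
  have hδ'pos : 0 < δ' := by positivity
  set R : ℝ[X] := q * q + Polynomial.C δ' with hRdef
  have hReval : ∀ x, R.eval x = (q.eval x) ^ 2 + δ' := by
    intro x; simp [hRdef]; ring
  have hRδ : ∀ x, δ' ≤ R.eval x := fun x => by
    rw [hReval]; nlinarith [sq_nonneg (q.eval x)]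
  have hRpos : ∀ x, (0:ℝ) < R.eval x := fun x => lt_of_lt_of_le hδ'pos (hRδ x)
  have hv2 : ∀ x ∈ Set.Icc (0:ℝ) 1, |v x - R.eval x| ≤ η / 2 := by
    intro x hx
    rw [hReval]
    have h1 : |q.eval x - w x| < θ := hq x hx
    have hw2 : w x ^ 2 = v x := Real.sq_sqrt (hvnn x)
    have hwB : |w x| ≤ B := by rw [← Real.norm_eq_abs]; exact hB x hx
    have hθ2 : θ * (2 * B + 1) ≤ η / 4 := by
      have h := min_le_right 1 (η / (4 * (2 * B + 1)))
      rw [le_div_iff₀ (by positivity)] at h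
      nlinarith
    have h3 : |w x - q.eval x| ≤ θ := by rw [abs_sub_comm]; linarith
    have h4 : |w x + q.eval x| ≤ 2 * B + 1 := by
      have h5 : |q.eval x| ≤ B + θ := by
        calc |q.eval x| = |w x + (q.eval x - w x)| := by ring_nf
          _ ≤ |w x| + |q.eval x - w x| := abs_add_le _ _
          _ ≤ B + θ := by linarith
      calc |w x + q.eval x| ≤ |w x| + |q.eval x| := abs_add_le _ _
        _ ≤ 2 * B + 1 := by linarith
    have h6 : |w x ^ 2 - (q.eval x) ^ 2| ≤ θ * (2 * B + 1) := by
      have hfac : w x ^ 2 - q.eval x ^ 2 = (w x - q.eval x) * (w x + q.eval x) := by ring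
      rw [hfac, abs_mul]
      exact mul_le_mul h3 h4 (abs_nonneg _) hθpos.le
    have h7 : |v x - ((q.eval x) ^ 2 + δ')| ≤ |v x - (q.eval x) ^ 2| + δ' := by
      have := abs_add_le (v x - (q.eval x) ^ 2) (-δ')
      simp only [abs_neg, abs_of_nonneg hδ'pos.le] at this
      calc |v x - ((q.eval x) ^ 2 + δ')| = |v x - (q.eval x) ^ 2 + -δ'| := by ring_nf
        _ ≤ |v x - (q.eval x) ^ 2| + δ' := this
    rw [← hw2] at h7 ⊢
    calc |w x ^ 2 - ((q.eval x) ^ 2 + δ')| ≤ |w x ^ 2 - (q.eval x) ^ 2| + δ' := h7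
      _ ≤ θ * (2 * B + 1) + δ' := by linarith
      _ ≤ η / 4 + η / 4 := by
          have hδ'4 : δ' = η / 4 := hδ'def
          linarith
      _ = η / 2 := by ring
  -- construction of the diffeomorphism
  obtain ⟨φ, ψ, J, hJint, hJpos, hφC, hψcont, hφcont, hφψ, hψφ, hψd, hφd, hφ0, hφ1,
    hφmono, hψmono, hψ0, hψ1⟩ := exists_diffeo R δ' hδ'pos hRδ
  have hφIcc : ∀ t ∈ Set.Icc (0:ℝ) 1, φ t ∈ Set.Icc (0:ℝ) 1 := by
    intro t ht
    exact ⟨hφ0 ▸ hφmono ht.1, hφ1 ▸ hφmono ht.2⟩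
  have hder : deriv φ = fun t => J / R.eval (φ t) := funext fun t => (hφd t).deriv
  have hdpos : ∀ t, 0 < J / R.eval (φ t) := fun t => div_pos hJpos (hRpos _)
  have hRint : IntegrableOn (fun x => R.eval x) (Set.Icc (0:ℝ) 1) :=
    R.continuous.integrableOn_Icc
  have hfg : ∫ x in Set.Icc (0:ℝ) 1, |f₀ x - R.eval x| ≤ η := by
    have hpt : ∀ x ∈ Set.Icc (0:ℝ) 1, |f₀ x - R.eval x| ≤ |f₀ x - v x| + η / 2 := by
      intro x hx
      calc |f₀ x - R.eval x| ≤ |f₀ x - v x| + |v x - R.eval x| := abs_sub_le _ _ _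
        _ ≤ |f₀ x - v x| + η / 2 := by linarith [hv2 x hx]
    have hint1 : IntegrableOn (fun x => |f₀ x - v x|) (Set.Icc (0:ℝ) 1) :=
      (hf₀int.sub hvcont.integrableOn_Icc).abs
    calc ∫ x in Set.Icc (0:ℝ) 1, |f₀ x - R.eval x|
        ≤ ∫ x in Set.Icc (0:ℝ) 1, (|f₀ x - v x| + η / 2) :=
          setIntegral_mono_on ((hf₀int.sub hRint).abs)
            (hint1.add (integrableOn_const (by simp [Real.volume_Icc])))
            measurableSet_Icc hpt
      _ = (∫ x in Set.Icc (0:ℝ) 1, |f₀ x - v x|) + ∫ x in Set.Icc (0:ℝ) 1, (η/2 : ℝ) :=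
          integral_add hint1 (integrableOn_const (by simp [Real.volume_Icc]))
      _ ≤ η / 4 + η / 2 := by
          have : ∫ x in Set.Icc (0:ℝ) 1, (η/2 : ℝ) = η / 2 := by
            simp [Real.volume_Icc]
          rw [this]
          linarith
      _ ≤ η := by linarith
  have hJI : |J - I| ≤ η := by
    rw [hJint, ← hIeq]
    calc |(∫ x in Set.Icc (0:ℝ) 1, R.eval x) - ∫ s in Set.Icc (0:ℝ) 1, f₀ s|
        = |∫ x in Set.Icc (0:ℝ) 1, (R.eval x - f₀ x)| := by
          rw [integral_sub hRint hf₀int]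
      _ ≤ ∫ x in Set.Icc (0:ℝ) 1, |R.eval x - f₀ x| := by
          have := norm_integral_le_integral_norm (μ := volume.restrict (Set.Icc (0:ℝ) 1))
            (f := fun x => R.eval x - f₀ x)
          simpa [Real.norm_eq_abs] using this
      _ = ∫ x in Set.Icc (0:ℝ) 1, |f₀ x - R.eval x| := by
          congr 1; funext x; rw [abs_sub_comm]
      _ ≤ η := hfg
  have hJc : J ≤ c - ε := by
    have h := (abs_le.1 hJI).2
    rw [hcdef]
    linarith
  set X₀ := {t ∈ Set.Icc (0:ℝ) 1 | c < f₀ (φ t) * (J / R.eval (φ t))} with hX₀def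
  have hgcont : Continuous fun t : ℝ => J / R.eval (φ t) :=
    continuous_const.div (R.continuous.comp hφcont) fun t => (hRpos _).ne'
  have hX₀meas : MeasurableSet X₀ := by
    have hXeq : X₀ = Set.Icc (0:ℝ) 1 ∩ {t | c < f₀ (φ t) * (J / R.eval (φ t))} := by
      ext t; simp [hX₀def, Set.mem_sep_iff, Set.mem_inter_iff]
    rw [hXeq]
    exact measurableSet_Icc.inter
      (measurableSet_lt measurable_const ((hf₀m.comp hφcont.measurable).mul hgcont.measurable))
  have hMnull : volume (ψ '' N) = 0 := by
    have h := addHaar_image_le_lintegral_abs_det_fderiv volume hNmeas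
      (f' := fun x => (1 : ℝ →L[ℝ] ℝ).smulRight (R.eval x / J))
      (fun x _ => ((hψd x).hasFDerivAt).hasFDerivWithinAt)
    rw [Measure.restrict_eq_zero.2 hNnull, lintegral_zero_measure] at h
    exact le_antisymm h zero_le
  have hmemM : ∀ t ∈ Set.Icc (0:ℝ) 1, f (φ t) ≠ f₀ (φ t) → t ∈ ψ '' N := by
    intro t ht hne
    have hmem : φ t ∈ N := by
      by_contra hn
      exact hne (hKey (φ t) (hφIcc t ht) hn)
    exact ⟨φ t, hmem, hψφ t⟩
  have hXae : {t ∈ Set.Icc (0:ℝ) 1 | c < f (φ t) * (J / R.eval (φ t))} =ᵐ[volume] X₀ := by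
    refine (MeasureTheory.ae_eq_set.2 ⟨measure_mono_null ?_ hMnull, measure_mono_null ?_ hMnull⟩)
    · rintro t ⟨⟨ht, hcl⟩, hnot⟩
      refine hmemM t ht fun heq => hnot ⟨ht, ?_⟩
      rwa [← heq]
    · rintro t ⟨⟨ht, hcl⟩, hnot⟩
      refine hmemM t ht fun heq => hnot ⟨ht, ?_⟩
      rwa [heq]
  have hφinj : Function.Injective φ := Function.LeftInverse.injective hψφ
  have hCOV : ∫ x in φ '' X₀, f₀ x = ∫ x in X₀, |J / R.eval (φ x)| • f₀ (φ x) :=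
    integral_image_eq_integral_abs_deriv_smul hX₀meas
      (fun x _ => (hφd x).hasDerivWithinAt) (hφinj.injOn) f₀
  set A := φ '' X₀ with hAdef
  have hAmeas : MeasurableSet A := by
    have h : A = ψ ⁻¹' X₀ := congrFun (Set.image_eq_preimage_of_inverse hψφ hφψ) X₀
    rw [h]
    exact hX₀meas.preimage hψcont.measurable
  have hAIcc : A ⊆ Set.Icc (0:ℝ) 1 := by
    rintro s ⟨t, ht, rfl⟩
    exact hφIcc t ht.1
  have hAprop : ∀ s ∈ A, c < f₀ s * (J / R.eval s) := by
    rintro s ⟨t, ht, rfl⟩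
    exact ht.2
  have hptA : ∀ s ∈ A, f₀ s ≤ (c / ε) * (f₀ s - R.eval s) := by
    intro s hs
    have h1 := hAprop s hs
    have h2 := hRpos s
    have h3 := hf₀nn s
    have h4 : c * R.eval s < f₀ s * J := by
      rw [mul_div_assoc'] at h1
      exact (lt_div_iff₀ h2).1 h1
    have h5 : ε * f₀ s ≤ c * (f₀ s - R.eval s) := by nlinarith
    rw [div_mul_eq_mul_div, le_div_iff₀ hε]
    linarith
  have hf₀A : IntegrableOn f₀ A := hf₀int.mono_set hAIcc
  have hRA : IntegrableOn (fun x => R.eval x) A := hRint.mono_set hAIcc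
  have hstep : ∫ x in A, f₀ x ≤ ε := by
    have hc1 : ∫ x in A, f₀ x ≤ ∫ x in A, (c / ε) * (f₀ x - R.eval x) :=
      setIntegral_mono_on hf₀A ((hf₀A.sub hRA).const_mul _) hAmeas hptA
    have hc2 : ∫ x in A, (c / ε) * (f₀ x - R.eval x)
        = (c / ε) * ∫ x in A, (f₀ x - R.eval x) := integral_const_mul _ _
    have hc3 : ∫ x in A, (f₀ x - R.eval x) ≤ ∫ x in A, |f₀ x - R.eval x| :=
      setIntegral_mono (hf₀A.sub hRA) ((hf₀A.sub hRA).abs) fun x => le_abs_self _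
    have hc4 : ∫ x in A, |f₀ x - R.eval x| ≤ ∫ x in Set.Icc (0:ℝ) 1, |f₀ x - R.eval x| :=
      setIntegral_mono_set ((hf₀int.sub hRint).abs)
        (Filter.Eventually.of_forall fun x => abs_nonneg _)
        (HasSubset.Subset.eventuallyLE hAIcc)
    have hc5 : (c / ε) * (ε ^ 2 / (2 * c)) = ε / 2 := by
      rw [div_mul_div_comm, show c * ε ^ 2 = ε * (2 * c) * (ε / 2) by ring]
      exact mul_div_cancel_left₀ _ (by positivity)
    have hc6 : 0 ≤ c / ε := by positivity
    calc ∫ x in A, f₀ x ≤ (c / ε) * ∫ x in A, (f₀ x - R.eval x) := by rw [← hc2]; exact hc1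
      _ ≤ (c / ε) * η := by
          refine mul_le_mul_of_nonneg_left ?_ hc6
          calc ∫ x in A, (f₀ x - R.eval x) ≤ ∫ x in A, |f₀ x - R.eval x| := hc3
            _ ≤ ∫ x in Set.Icc (0:ℝ) 1, |f₀ x - R.eval x| := hc4
            _ ≤ η := hfg
      _ = ε / 2 := by rw [hηdef]; exact hc5
      _ ≤ ε := by linarith
  refine ⟨φ, ⟨hφC, hφ0, hφ1, fun t _ => by simp only [hder]; exact hdpos t⟩, ?_⟩
  have e2 : ∫ t in X₀, f (φ t) * (J / R.eval (φ t))
      = ∫ t in X₀, f₀ (φ t) * (J / R.eval (φ t)) := by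
    apply integral_congr_ae
    rw [Filter.EventuallyEq, ae_iff]
    apply le_antisymm _ zero_le
    calc (volume.restrict X₀) {t | ¬ f (φ t) * (J / R.eval (φ t)) = f₀ (φ t) * (J / R.eval (φ t))}
        = volume ({t | ¬ f (φ t) * (J / R.eval (φ t)) = f₀ (φ t) * (J / R.eval (φ t))} ∩ X₀) :=
          Measure.restrict_apply' hX₀meas
      _ ≤ volume (ψ '' N) := by
          refine measure_mono ?_
          rintro t ⟨hne, htX⟩
          exact hmemM t htX.1 fun heq => hne (by rw [heq])
      _ = 0 := hMnull
  have e3 : ∫ t in X₀, f₀ (φ t) * (J / R.eval (φ t))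
      = ∫ x in X₀, |J / R.eval (φ x)| • f₀ (φ x) := by
    refine integral_congr_ae (Filter.Eventually.of_forall fun x => ?_)
    simp only [smul_eq_mul]
    rw [abs_of_pos (hdpos x), mul_comm]
  have e1 : ∫ t in {t ∈ Set.Icc (0:ℝ) 1 | c < f (φ t) * (J / R.eval (φ t))},
      f (φ t) * (J / R.eval (φ t)) = ∫ t in X₀, f (φ t) * (J / R.eval (φ t)) :=
    setIntegral_congr_set hXae
  simp only [hder, gt_iff_lt]
  rw [e1, e2, e3, ← hCOV]
  exact hstep


end AuxiliaryLemmas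

end
end

section
/- Let M be a connected smooth manifold without boundary and let x₀, x₁ ∈ M. Then there exists a diffeomorphism ψ : M → M with compact support such that ψ(x₀) = x₁. -/
open Function Set
open scoped Manifold

noncomputable section

/-- `ψ` is a diffeomorphism of the manifold `M` with compact support: it is smooth, has a
smooth two-sided inverse, and the closure of `{x : ψ x ≠ x}` is compact. -/
def IsCSDiffeoM (n : ℕ) {M : Type*} [TopologicalSpace M]
    [ChartedSpace (EuclideanSpace ℝ (Fin n)) M] [IsManifold (𝓡 n) (⊤ : ℕ∞) M]
    (ψ : M → M) : Prop :=
  ContMDiff (𝓡 n) (𝓡 n) (⊤ : ℕ∞) ψ ∧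
  (∃ ψinv : M → M, ContMDiff (𝓡 n) (𝓡 n) (⊤ : ℕ∞) ψinv ∧
    Function.LeftInverse ψinv ψ ∧ Function.RightInverse ψinv ψ) ∧
  IsCompact (closure {x : M | ψ x ≠ x})

/-! Call `x` and `y` related if some compactly supported diffeomorphism takes `x` to `y`; this is an
equivalence relation, so by connectedness it suffices that every `x` is related to all nearby
points. In a chart `e` around `x`, take a bump function `β` equal to `1` at `e x` and supported
in a small closed ball inside the chart's target. For small `v`, `z ↦ z + β z • v` perturbs the
identity by a contraction, so it is a homeomorphism of the model space; it is smooth with smooth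
inverse by the inverse function theorem, fixes everything outside the ball, and sends `e x` to
`e x + v`. Conjugating it by `e` and extending by the identity gives a diffeomorphism of `M`,
smooth because the image of the ball under `e.symm` is compact, hence closed as `M` is Hausdorff. -/

open Metric
open scoped NNReal Topology ContDiff

theorem Function.Injective.mapsTo_of_forall_notMem_eq_self {α : Type*} {φ : α → α}
    (hφ : Injective φ) {s K : Set α} (hKs : K ⊆ s) (hφK : ∀ x ∉ K, φ x = x) :
    MapsTo φ s s := by
  intro x hx
  by_cases h : φ x ∈ K
  · exact hKs h
  · rwa [hφ (hφK _ h)]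

namespace OpenPartialHomeomorph

variable {H M : Type*} [TopologicalSpace H] [TopologicalSpace M]

open scoped Classical in
def transport (e : OpenPartialHomeomorph M H) (φ : H → H) : M → M :=
  e.source.piecewise (e.symm ∘ φ ∘ e) id

variable (e : OpenPartialHomeomorph M H) {φ φ' : H → H} {K : Set H} {y : M}

theorem transport_apply_of_mem (hy : y ∈ e.source) : e.transport φ y = e.symm (φ (e y)) := by
  classical
  exact piecewise_eq_of_mem _ _ _ hy

theorem transport_apply_of_notMem (hy : y ∉ e.source) : e.transport φ y = y := by
  classical
  exact piecewise_eq_of_notMem _ _ _ hy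

theorem transport_eq_self (hφK : ∀ x ∉ K, φ x = x) (hy : y ∉ e.symm '' K) :
    e.transport φ y = y := by
  by_cases hys : y ∈ e.source
  · have hK : e y ∉ K := fun h => hy ⟨e y, h, e.left_inv hys⟩
    rw [transport_apply_of_mem e hys, hφK _ hK, e.left_inv hys]
  · exact transport_apply_of_notMem e hys

theorem transport_leftInverse (h : LeftInverse φ' φ) (hφ : MapsTo φ e.target e.target) :
    LeftInverse (e.transport φ') (e.transport φ) := by
  intro y
  by_cases hys : y ∈ e.source
  · have hφy := hφ (e.map_source hys)
    rw [transport_apply_of_mem e hys, transport_apply_of_mem e (e.map_target hφy),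
      e.right_inv hφy, h, e.left_inv hys]
  · rw [transport_apply_of_notMem e hys, transport_apply_of_notMem e hys]

theorem isCompact_symm_image (hK : IsCompact K) (hKe : K ⊆ e.target) :
    IsCompact (e.symm '' K) :=
  hK.image_of_continuousOn (e.continuousOn_symm.mono hKe)

theorem isCompact_closure_transport_ne [T2Space M] (hK : IsCompact K) (hKe : K ⊆ e.target)
    (hφK : ∀ x ∉ K, φ x = x) : IsCompact (closure {y | e.transport φ y ≠ y}) := by
  have hcpt := e.isCompact_symm_image hK hKe
  refine hcpt.of_isClosed_subset isClosed_closure (closure_minimal (fun y hy => ?_) hcpt.isClosed)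
  by_contra hyK
  exact hy (e.transport_eq_self hφK hyK)

variable {𝕜 E : Type*} [NontriviallyNormedField 𝕜] [NormedAddCommGroup E] [NormedSpace 𝕜 E]
  {I : ModelWithCorners 𝕜 E H} [ChartedSpace H M] {n : WithTop ℕ∞}

theorem contMDiff_transport [T2Space M] (he : e ∈ IsManifold.maximalAtlas I n M)
    (hφ : ContMDiff I I n φ) (hmaps : MapsTo φ e.target e.target) (hK : IsCompact K)
    (hKe : K ⊆ e.target) (hφK : ∀ x ∉ K, φ x = x) : ContMDiff I I n (e.transport φ) := by
  refine contMDiff_of_locally_contMDiffOn fun y => ?_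
  by_cases hys : y ∈ e.source
  · refine ⟨e.source, e.open_source, hys, ?_⟩
    have hcomp : ContMDiffOn I I n (e.symm ∘ φ ∘ e) e.source :=
      (contMDiffOn_symm_of_mem_maximalAtlas he).comp
        (hφ.comp_contMDiffOn (contMDiffOn_of_mem_maximalAtlas he))
        fun x hx => hmaps (e.map_source hx)
    exact hcomp.congr fun z hz => e.transport_apply_of_mem hz
  · have hcpt := e.isCompact_symm_image hK hKe
    refine ⟨(e.symm '' K)ᶜ, hcpt.isClosed.isOpen_compl, fun h => hys ?_, ?_⟩
    · obtain ⟨x, hx, rfl⟩ := h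
      exact e.map_target (hKe hx)
    · exact contMDiffOn_id.congr fun z hz => e.transport_eq_self hφK hz

end OpenPartialHomeomorph

section PerturbationOfIdentity

variable {E : Type*} [NormedAddCommGroup E] [NormedSpace ℝ E] [CompleteSpace E]
  {g : E → E} {K : ℝ≥0}

def LipschitzWith.idAddHomeomorph (hg : LipschitzWith K g) (hK : K < 1) :
    E ≃ₜ E :=
  ApproximatesLinearOn.toHomeomorph (fun x => x + g x) (f' := ContinuousLinearEquiv.refl ℝ E)
    (c := K) (by
      refine LipschitzOnWith.approximatesLinearOn ?_
      simpa [Pi.sub_def] using hg)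
    (by
      rcases subsingleton_or_nontrivial E with h | h
      · exact Or.inl h
      · right
        simpa [ContinuousLinearEquiv.coe_refl, ContinuousLinearMap.norm_id] using hK)

@[simp]
theorem LipschitzWith.idAddHomeomorph_apply (hg : LipschitzWith K g) (hK : K < 1) (x : E) :
    hg.idAddHomeomorph hK x = x + g x :=
  rfl

theorem LipschitzWith.contDiff_idAddHomeomorph_symm {n : WithTop ℕ∞} (hg : LipschitzWith K g)
    (hK : K < 1) (hgs : ContDiff ℝ n g) (hn : n ≠ 0) :
    ContDiff ℝ n (hg.idAddHomeomorph hK).symm := by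
  -- `1 + g'` is invertible by the Neumann series, since `‖g'‖ ≤ K < 1`
  have hsmall : ∀ a, ‖-fderiv ℝ g a‖ < 1 := fun a => by
    rw [norm_neg]
    exact (norm_fderiv_le_of_lipschitz ℝ hg).trans_lt hK
  refine (hg.idAddHomeomorph hK).contDiff_symm
    (f₀' := fun a => .ofUnit (Units.oneSub _ (hsmall a))) (fun a => ?_) (contDiff_id.add hgs)
  have hderiv : HasFDerivAt (fun x => x + g x) (ContinuousLinearMap.id ℝ E + fderiv ℝ g a) a :=
    (hasFDerivAt_id a).add (hgs.differentiable hn a).hasFDerivAt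
  refine hderiv.congr_fderiv (ContinuousLinearMap.ext fun x => ?_)
  simp [ContinuousLinearEquiv.ofUnit, Units.val_oneSub]

end PerturbationOfIdentity

section Bump

variable {E : Type*} [NormedAddCommGroup E] [NormedSpace ℝ E] [FiniteDimensional ℝ E]
  [HasContDiffBump E]

theorem exists_contDiff_homeomorph_eq_self_off_closedBall (c : E) {r : ℝ} (hr : 0 < r) :
    ∃ ε > 0, ∀ v : E, ‖v‖ < ε → ∃ Φ : E ≃ₜ E, ContDiff ℝ ∞ Φ ∧ ContDiff ℝ ∞ Φ.symm ∧
      (∀ x ∉ closedBall c r, Φ x = x) ∧ Φ c = c + v := by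
  let bump : ContDiffBump c := ⟨r / 2, r, half_pos hr, half_lt_self hr⟩
  obtain ⟨K, hK⟩ := ContDiff.lipschitzWith_of_hasCompactSupport bump.hasCompactSupport
    (bump.contDiff (n := 1)) one_ne_zero
  refine ⟨(K + 1)⁻¹, by positivity, fun v hv => ?_⟩
  let g : E → E := fun x => bump x • v
  have hgs : ContDiff ℝ ∞ g := bump.contDiff.smul contDiff_const
  have hg : LipschitzWith (‖v‖₊ * K) g := by
    have := (ContinuousLinearMap.toSpanSingleton ℝ v).lipschitz.comp hK
    rwa [ContinuousLinearMap.nnnorm_toSpanSingleton] at this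
  have hsmall : ‖v‖₊ * K < 1 := by
    rw [← NNReal.coe_lt_one]
    push_cast
    calc ‖v‖ * K ≤ ‖v‖ * (K + 1) := by gcongr; linarith
      _ < ((K : ℝ) + 1)⁻¹ * (K + 1) := by gcongr
      _ = 1 := inv_mul_cancel₀ (by positivity)
  refine ⟨hg.idAddHomeomorph hsmall, contDiff_id.add hgs,
    hg.contDiff_idAddHomeomorph_symm hsmall hgs (by simp), fun x hx => ?_, ?_⟩
  · have : bump x = 0 := bump.zero_of_le_dist (by simpa using (not_le.mp hx).le)
    simp [g, this]
  · have : bump c = 1 := bump.one_of_mem_closedBall (mem_closedBall_self (half_pos hr).le)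
    simp [g, this]

end Bump

section CompactlySupportedDiffeo

variable {n : ℕ} {M : Type*} [TopologicalSpace M] [ChartedSpace (EuclideanSpace ℝ (Fin n)) M]
  [IsManifold (𝓡 n) (⊤ : ℕ∞) M] {ψ φ : M → M}

theorem IsCSDiffeoM.id : IsCSDiffeoM n (id : M → M) :=
  ⟨contMDiff_id, ⟨_root_.id, contMDiff_id, fun _ => rfl, fun _ => rfl⟩, by simp⟩

theorem IsCSDiffeoM.comp (hψ : IsCSDiffeoM n ψ) (hφ : IsCSDiffeoM n φ) :
    IsCSDiffeoM n (ψ ∘ φ) := by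
  obtain ⟨hψs, ⟨ψi, hψis, hψl, hψr⟩, hψc⟩ := hψ
  obtain ⟨hφs, ⟨φi, hφis, hφl, hφr⟩, hφc⟩ := hφ
  refine ⟨hψs.comp hφs, ⟨φi ∘ ψi, hφis.comp hψis, hψl.comp hφl, hψr.comp hφr⟩, ?_⟩
  have hsub : {x | (ψ ∘ φ) x ≠ x} ⊆ {x | φ x ≠ x} ∪ {x | ψ x ≠ x} := by
    intro x hx
    by_contra! h
    simp_all
  refine (hφc.union hψc).of_isClosed_subset isClosed_closure ?_
  exact (closure_mono hsub).trans_eq closure_union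

theorem IsCSDiffeoM.exists_leftInverse (hψ : IsCSDiffeoM n ψ) :
    ∃ ψinv : M → M, IsCSDiffeoM n ψinv ∧ LeftInverse ψinv ψ := by
  obtain ⟨hψs, ⟨ψi, hψis, hψl, hψr⟩, hψc⟩ := hψ
  refine ⟨ψi, ⟨hψis, ⟨ψ, hψs, hψr, hψl⟩, ?_⟩, hψl⟩
  have hsub : {x | ψi x ≠ x} ⊆ {x | ψ x ≠ x} := fun x hx h => hx (by simpa [h] using hψl x)
  exact hψc.of_isClosed_subset isClosed_closure (closure_mono hsub)

theorem IsCSDiffeoM.transport [T2Space M] {p : M}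
    {Φ : EuclideanSpace ℝ (Fin n) ≃ₜ EuclideanSpace ℝ (Fin n)} (hΦ : ContDiff ℝ ∞ Φ)
    (hΦsymm : ContDiff ℝ ∞ Φ.symm) {K : Set (EuclideanSpace ℝ (Fin n))} (hK : IsCompact K)
    (hKe : K ⊆ (chartAt _ p).target) (hΦK : ∀ x ∉ K, Φ x = x) :
    IsCSDiffeoM n ((chartAt _ p).transport Φ) := by
  set e := chartAt (EuclideanSpace ℝ (Fin n)) p
  have hΦsymmK : ∀ x ∉ K, Φ.symm x = x := fun x hx => Φ.symm_apply_eq.mpr (hΦK x hx).symm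
  have hmaps := Φ.injective.mapsTo_of_forall_notMem_eq_self hKe hΦK
  have hmaps_symm := Φ.symm.injective.mapsTo_of_forall_notMem_eq_self hKe hΦsymmK
  have he := IsManifold.chart_mem_maximalAtlas (I := 𝓡 n) (n := ∞) p
  exact ⟨e.contMDiff_transport he hΦ.contMDiff hmaps hK hKe hΦK,
    ⟨e.transport Φ.symm,
      e.contMDiff_transport he hΦsymm.contMDiff hmaps_symm hK hKe hΦsymmK,
      e.transport_leftInverse Φ.symm_apply_apply hmaps,
      e.transport_leftInverse Φ.apply_symm_apply hmaps_symm⟩,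
    e.isCompact_closure_transport_ne hK hKe hΦK⟩

theorem eventually_exists_isCSDiffeoM_apply_eq [T2Space M] (x : M) :
    ∀ᶠ y in 𝓝 x, ∃ ψ : M → M, IsCSDiffeoM n ψ ∧ ψ x = y := by
  set e := chartAt (EuclideanSpace ℝ (Fin n)) x
  obtain ⟨r, hr, hre⟩ : ∃ r > 0, closedBall (e x) r ⊆ e.target :=
    nhds_basis_closedBall.mem_iff.mp (e.open_target.mem_nhds (mem_chart_target _ x))
  obtain ⟨ε, hε, hmove⟩ := exists_contDiff_homeomorph_eq_self_off_closedBall (e x) hr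
  filter_upwards [chart_source_mem_nhds (EuclideanSpace ℝ (Fin n)) x,
    e.continuousAt (mem_chart_source _ x) (ball_mem_nhds (e x) hε)] with y hys hyε
  obtain ⟨Φ, hΦ, hΦsymm, hΦK, hΦx⟩ := hmove (e y - e x) (mem_ball_iff_norm.mp hyε)
  refine ⟨e.transport Φ, .transport hΦ hΦsymm (isCompact_closedBall _ _) hre hΦK, ?_⟩
  rw [e.transport_apply_of_mem (mem_chart_source _ x), hΦx, add_sub_cancel, e.left_inv hys]

end CompactlySupportedDiffeo

/-- In a connected smooth manifold without boundary, any point can be taken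
to any other point by a diffeomorphism with compact support. -/
theorem statement9 (n : ℕ) {M : Type*} [TopologicalSpace M] [T2Space M]
    [ChartedSpace (EuclideanSpace ℝ (Fin n)) M] [IsManifold (𝓡 n) (⊤ : ℕ∞) M]
    [ConnectedSpace M] (x₀ x₁ : M) :
    ∃ ψ : M → M, IsCSDiffeoM n ψ ∧ ψ x₀ = x₁ := by
  let P (x y : M) : Prop := ∃ ψ : M → M, IsCSDiffeoM n ψ ∧ ψ x = y
  have hsymm : Std.Symm P := ⟨fun x y ⟨ψ, hψ, hxy⟩ => by
    obtain ⟨ψinv, hψinv, hleft⟩ := hψ.exists_leftInverse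
    exact ⟨ψinv, hψinv, hxy ▸ hleft x⟩⟩
  have htrans : IsTrans M P := ⟨fun x y z ⟨ψ, hψ, hxy⟩ ⟨φ, hφ, hyz⟩ =>
    ⟨φ ∘ ψ, hφ.comp hψ, by simp [hxy, hyz]⟩⟩
  exact PreconnectedSpace.induction₂ P eventually_exists_isCSDiffeoM_apply_eq htrans x₀ x₁
end
end

section
/- Let n ≥ 1 and let H, H' be time-dependent Hamiltonians on ℝ^{2n} such that there is δ > 0 with H_t = 0 and H'_t = 0 for all t ∈ [0,δ] ∪ [1−δ,1]. Define X := ∪_{t∈[0,1]} supp(H_t), let ψ be a Hamiltonian flow of H and ψ' a Hamiltonian flow of H', and assume ψ'_1(X) ∩ X = ∅. Define the concatenation H#H' by (H#H')_t := 2·H_{2t} for t ∈ [0,1/2], (H#H')_t := 2·H'_{2t−1} for t ∈ (1/2,1], and (H#H')_t := 0 for t outside [0,1] (this is a smooth time-dependent Hamiltonian), and let Φ be a Hamiltonian flow of H#H'. Then: (i) the fixed point set of Φ_1 equals the fixed point set of ψ'_1; and (ii) for every fixed point x₀ of ψ'_1, A_{H#H'}(x₀) = A_{H'}(x₀), where for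 a time-dependent Hamiltonian K with flow Θ and a fixed point x₀ of Θ_1, writing Θ_t(x₀) = (q(t), p(t)) ∈ ℝⁿ × ℝⁿ, the symplectic action is A_K(x₀) := ∫₀¹ p(t)·q̇(t) dt − ∫₀¹ K(t, Θ_t(x₀)) dt. -/
open MeasureTheory Function Set

noncomputable section

/-- `ℝ^{2n}` identified as `ℝⁿ × ℝⁿ` with coordinates `(q, p)`. -/
abbrev V (n : ℕ) : Type := (Fin n → ℝ) × (Fin n → ℝ)

/-- The Hamiltonian vector field `X_{H_t}(q,p) = (∂_p H, -∂_q H)` of a time-dependent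
Hamiltonian `H`. -/
noncomputable def hamVF (n : ℕ) (H : ℝ × V n → ℝ) (t : ℝ) (x : V n) : V n :=
  (fun i => fderiv ℝ (fun y => H (t, y)) x (0, Pi.single i 1),
   fun i => - fderiv ℝ (fun y => H (t, y)) x (Pi.single i 1, 0))

/-- A time-dependent Hamiltonian: a smooth compactly supported function `ℝ × ℝ^{2n} → ℝ`. -/
def IsTDHam (n : ℕ) (H : ℝ × V n → ℝ) : Prop :=
  ContDiff ℝ (⊤ : ℕ∞) H ∧ HasCompactSupport H

/-- `ψ` is a Hamiltonian flow of `H`: `ψ 0 = id`, and `t ↦ ψ t x` solves the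
Hamiltonian ODE of `H`. -/
def IsHamFlow (n : ℕ) (H : ℝ × V n → ℝ) (ψ : ℝ → V n → V n) : Prop :=
  ψ 0 = id ∧ ∀ (x : V n) (t : ℝ), HasDerivAt (fun s => ψ s x) (hamVF n H t (ψ t x)) t

/-- The time-concatenation `H#H'`: equal to `2·H_{2t}` for `t ∈ [0,1/2]`, to `2·H'_{2t-1}`
for `t ∈ (1/2,1]` and to `0` outside `[0,1]`. -/
noncomputable def concat (n : ℕ) (H H' : ℝ × V n → ℝ) : ℝ × V n → ℝ := fun p =>
  if p.1 < 0 then 0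
  else if p.1 ≤ 1 / 2 then 2 * H (2 * p.1, p.2)
  else if p.1 ≤ 1 then 2 * H' (2 * p.1 - 1, p.2)
  else 0

section helpers

variable {n : ℕ} {K K' : ℝ × V n → ℝ}

lemma diff_slice (hK : ContDiff ℝ (⊤ : ℕ∞) K) (t : ℝ) :
    Differentiable ℝ (fun y : V n => K (t, y)) :=
  (hK.differentiable (by simp)).comp ((differentiable_const t).prodMk differentiable_id)

lemma fderiv_slice (hK : ContDiff ℝ (⊤ : ℕ∞) K) (t : ℝ) (x : V n) :
    fderiv ℝ (fun y : V n => K (t, y)) x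
      = (fderiv ℝ K (t, x)).comp (ContinuousLinearMap.inr ℝ ℝ (V n)) := by
  have h1 : HasFDerivAt (fun y : V n => ((t : ℝ), y)) (ContinuousLinearMap.inr ℝ ℝ (V n)) x :=
    (hasFDerivAt_const t x).prodMk (hasFDerivAt_id x)
  exact (((hK.differentiable (by simp)) (t, x)).hasFDerivAt.comp x h1).fderiv

lemma hamVF_zero_of_eventually {t : ℝ} {x : V n}
    (h : (fun y : V n => K (t, y)) =ᶠ[nhds x] fun _ => 0) : hamVF n K t x = 0 := by
  have hd : fderiv ℝ (fun y : V n => K (t, y)) x = 0 := by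
    rw [h.fderiv_eq]; exact fderiv_const_apply 0
  unfold hamVF
  rw [hd]
  refine Prod.ext ?_ ?_ <;> funext i <;> simp

lemma hamVF_zero_of_zero {t : ℝ} (h : ∀ y, K (t, y) = 0) (x : V n) : hamVF n K t x = 0 :=
  hamVF_zero_of_eventually (by filter_upwards with y using h y)

lemma hamVF_two_smul {t s : ℝ} (hK : ContDiff ℝ (⊤ : ℕ∞) K)
    (heq : (fun y : V n => K' (t, y)) = fun y => 2 * K (s, y)) (x : V n) :
    hamVF n K' t x = (2 : ℝ) • hamVF n K s x := by
  have hd : fderiv ℝ (fun y : V n => K' (t, y)) x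
      = (2 : ℝ) • fderiv ℝ (fun y : V n => K (s, y)) x := by
    rw [heq]
    exact fderiv_const_mul (diff_slice hK s x) 2
  unfold hamVF
  rw [hd]
  refine Prod.ext ?_ ?_ <;> funext i <;> simp [mul_neg]

lemma hamVF_lipschitz (hK : IsTDHam n K) :
    ∃ C : NNReal, ∀ t, LipschitzWith C (hamVF n K t) := by
  obtain ⟨C, hC⟩ := ContDiff.lipschitzWith_of_hasCompactSupport (hK.2.fderiv (𝕜 := ℝ))
    (hK.1.fderiv_right (m := 1) (by exact WithTop.coe_le_coe.mpr le_top)) one_ne_zero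
  refine ⟨C, fun t => LipschitzWith.of_dist_le_mul fun x y => ?_⟩
  have key : ∀ v : V n, ‖v‖ ≤ 1 →
      dist (fderiv ℝ (fun y' : V n => K (t, y')) x v)
        (fderiv ℝ (fun y' : V n => K (t, y')) y v) ≤ C * dist x y := by
    intro v hv
    rw [fderiv_slice hK.1, fderiv_slice hK.1, ContinuousLinearMap.comp_apply,
      ContinuousLinearMap.comp_apply, dist_eq_norm]
    have h1 : fderiv ℝ K (t, x) (ContinuousLinearMap.inr ℝ ℝ (V n) v)
        - fderiv ℝ K (t, y) (ContinuousLinearMap.inr ℝ ℝ (V n) v)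
        = (fderiv ℝ K (t, x) - fderiv ℝ K (t, y)) (ContinuousLinearMap.inr ℝ ℝ (V n) v) := by
      simp
    rw [h1]
    have h2 : ‖ContinuousLinearMap.inr ℝ ℝ (V n) v‖ ≤ 1 := by
      simpa [Prod.norm_def] using hv
    calc ‖(fderiv ℝ K (t, x) - fderiv ℝ K (t, y)) (ContinuousLinearMap.inr ℝ ℝ (V n) v)‖
        ≤ ‖fderiv ℝ K (t, x) - fderiv ℝ K (t, y)‖ * ‖ContinuousLinearMap.inr ℝ ℝ (V n) v‖ :=
          ContinuousLinearMap.le_opNorm _ _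
      _ ≤ ‖fderiv ℝ K (t, x) - fderiv ℝ K (t, y)‖ * 1 := by
          exact mul_le_mul_of_nonneg_left h2 (norm_nonneg _)
      _ = dist (fderiv ℝ K (t, x)) (fderiv ℝ K (t, y)) := by rw [mul_one, dist_eq_norm]
      _ ≤ C * dist (t, x) ((t : ℝ), y) := hC.dist_le_mul _ _
      _ = C * dist x y := by rw [Prod.dist_eq]; simp [dist_nonneg]
  have hCd : (0 : ℝ) ≤ C * dist x y := by positivity
  rw [Prod.dist_eq, max_le_iff]
  constructor
  · rw [dist_pi_le_iff hCd]
    intro i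
    exact key ((0 : Fin n → ℝ), Pi.single i 1) (by simp [Prod.norm_def, Pi.norm_single])
  · rw [dist_pi_le_iff hCd]
    intro i
    show dist (-(fderiv ℝ (fun y' : V n => K (t, y')) x (Pi.single i 1, 0)))
      (-(fderiv ℝ (fun y' : V n => K (t, y')) y (Pi.single i 1, 0))) ≤ (C : ℝ) * dist x y
    rw [dist_neg_neg]
    exact key (Pi.single i 1, (0 : Fin n → ℝ)) (by simp [Prod.norm_def, Pi.norm_single])

lemma cont_hamVF_comp (hK : ContDiff ℝ (⊤ : ℕ∞) K) {c : ℝ → V n} (hc : Continuous c) (v : V n) :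
    Continuous fun s => fderiv ℝ (fun y : V n => K (s, y)) (c s) v := by
  have h : ∀ s, fderiv ℝ (fun y : V n => K (s, y)) (c s) v
      = fderiv ℝ K (s, c s) ((0 : ℝ), v) := by
    intro s; rw [fderiv_slice hK]; rfl
  simp_rw [h]
  exact ((hK.continuous_fderiv (by simp)).comp (continuous_id.prodMk hc)).clm_apply
    continuous_const

end helpers


section helpers2

variable {n : ℕ} {H H' : ℝ × V n → ℝ}

lemma concat_eq_left {t : ℝ} (h0 : 0 ≤ t) (h1 : t ≤ 1 / 2) :
    (fun y : V n => concat n H H' (t, y)) = fun y => 2 * H (2 * t, y) := by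
  funext y
  show (if t < 0 then 0 else if t ≤ 1 / 2 then 2 * H (2 * t, y)
    else if t ≤ 1 then 2 * H' (2 * t - 1, y) else 0) = 2 * H (2 * t, y)
  rw [if_neg (not_lt.mpr h0), if_pos h1]

lemma concat_eq_right {t : ℝ} (h0 : 1 / 2 < t) (h1 : t ≤ 1) :
    (fun y : V n => concat n H H' (t, y)) = fun y => 2 * H' (2 * t - 1, y) := by
  funext y
  show (if t < 0 then 0 else if t ≤ 1 / 2 then 2 * H (2 * t, y)
    else if t ≤ 1 then 2 * H' (2 * t - 1, y) else 0) = 2 * H' (2 * t - 1, y)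
  rw [if_neg (not_lt.mpr (le_trans (by norm_num) h0.le)), if_neg (not_le.mpr h0), if_pos h1]

lemma flow_unique_right {v : ℝ → V n → V n} {C : NNReal}
    (hv : ∀ t, LipschitzWith C (v t)) {f g : ℝ → V n} {a b : ℝ}
    (hf : ∀ t ∈ Icc a b, HasDerivAt f (v t (f t)) t)
    (hg : ∀ t ∈ Icc a b, HasDerivAt g (v t (g t)) t)
    (ha : f a = g a) : EqOn f g (Icc a b) :=
  ODE_solution_unique hv
    (fun t ht => (hf t ht).continuousAt.continuousWithinAt)
    (fun t ht => (hf t (Ico_subset_Icc_self ht)).hasDerivWithinAt)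
    (fun t ht => (hg t ht).continuousAt.continuousWithinAt)
    (fun t ht => (hg t (Ico_subset_Icc_self ht)).hasDerivWithinAt) ha

lemma flow_unique_left {v : ℝ → V n → V n} {C : NNReal}
    (hv : ∀ t, LipschitzWith C (v t)) {f g : ℝ → V n} {a b : ℝ}
    (hf : ∀ t ∈ Icc a b, HasDerivAt f (v t (f t)) t)
    (hg : ∀ t ∈ Icc a b, HasDerivAt g (v t (g t)) t)
    (hb : f b = g b) : EqOn f g (Icc a b) :=
  ODE_solution_unique_of_mem_Icc_left (fun t _ => (hv t).lipschitzOnWith (s := univ))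
    (fun t ht => (hf t ht).continuousAt.continuousWithinAt)
    (fun t ht => (hf t (Ioc_subset_Icc_self ht)).hasDerivWithinAt)
    (fun _ _ => trivial)
    (fun t ht => (hg t ht).continuousAt.continuousWithinAt)
    (fun t ht => (hg t (Ioc_subset_Icc_self ht)).hasDerivWithinAt)
    (fun _ _ => trivial) hb

lemma lipschitz_concat (hH : IsTDHam n H) (hH' : IsTDHam n H') :
    ∃ C : NNReal, ∀ t, LipschitzWith C (hamVF n (concat n H H') t) := by
  obtain ⟨CH, hCH⟩ := hamVF_lipschitz hH
  obtain ⟨CH', hCH'⟩ := hamVF_lipschitz hH'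
  refine ⟨2 * (CH ⊔ CH'), fun t => ?_⟩
  have hz : ∀ h : (∀ y : V n, concat n H H' (t, y) = 0),
      LipschitzWith (2 * (CH ⊔ CH')) (hamVF n (concat n H H') t) := by
    intro h
    have he : hamVF n (concat n H H') t = fun _ => (0 : V n) :=
      funext fun x => hamVF_zero_of_zero h x
    rw [he]
    exact (LipschitzWith.const (0 : V n)).weaken (by positivity)
  rcases lt_or_ge t 0 with h0 | h0
  · refine hz fun y => ?_
    show (if t < 0 then 0 else if t ≤ 1 / 2 then 2 * H (2 * t, y)
      else if t ≤ 1 then 2 * H' (2 * t - 1, y) else 0) = 0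
    rw [if_pos h0]
  rcases le_or_gt t (1 / 2) with h1 | h1
  · have he : hamVF n (concat n H H') t = fun x => (2 : ℝ) • hamVF n H (2 * t) x :=
      funext fun x => hamVF_two_smul hH.1 (concat_eq_left h0 h1) x
    rw [he]
    refine LipschitzWith.of_dist_le_mul fun x y => ?_
    have h := (hCH (2 * t)).dist_le_mul x y
    have hle : (CH : ℝ) ≤ (CH : ℝ) ⊔ (CH' : ℝ) := le_sup_left
    have hn : ‖(2:ℝ)‖ = 2 := by norm_num
    rw [dist_smul₀, hn]
    push_cast
    have hd : (0:ℝ) ≤ dist x y := dist_nonneg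
    nlinarith [mul_nonneg (sub_nonneg.mpr hle) hd]
  rcases le_or_gt t 1 with h2 | h2
  · have he : hamVF n (concat n H H') t = fun x => (2 : ℝ) • hamVF n H' (2 * t - 1) x :=
      funext fun x => hamVF_two_smul hH'.1 (concat_eq_right h1 h2) x
    rw [he]
    refine LipschitzWith.of_dist_le_mul fun x y => ?_
    have h := (hCH' (2 * t - 1)).dist_le_mul x y
    have hle : (CH' : ℝ) ≤ (CH : ℝ) ⊔ (CH' : ℝ) := le_sup_right
    have hn : ‖(2:ℝ)‖ = 2 := by norm_num
    rw [dist_smul₀, hn]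
    push_cast
    have hd : (0:ℝ) ≤ dist x y := dist_nonneg
    nlinarith [mul_nonneg (sub_nonneg.mpr hle) hd]
  · refine hz fun y => ?_
    show (if t < 0 then 0 else if t ≤ 1 / 2 then 2 * H (2 * t, y)
      else if t ≤ 1 then 2 * H' (2 * t - 1, y) else 0) = 0
    rw [if_neg (not_lt.mpr h0), if_neg (not_le.mpr h1), if_neg (not_le.mpr h2)]

end helpers2

/-- The symplectic action of a fixed point `x₀` of the time-one map of the flow `Θ` of a
time-dependent Hamiltonian `K` on `ℝ^{2n}`: writing `Θ t x₀ = (q t, p t)`,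
`A_K(x₀) = ∫₀¹ p·q̇ dt − ∫₀¹ K(t, Θ t x₀) dt`. -/
noncomputable def action (n : ℕ) (K : ℝ × V n → ℝ) (Θ : ℝ → V n → V n) (x₀ : V n) : ℝ :=
  (∫ t in (0:ℝ)..1, ∑ i : Fin n, (Θ t x₀).2 i * deriv (fun s => (Θ s x₀).1 i) t) -
    ∫ t in (0:ℝ)..1, K (t, Θ t x₀)

/-- Suppose `H, H'` vanish for times in `[0,δ] ∪ [1−δ,1]`, and the time-one
map of `H'` displaces `X := ∪_{t∈[0,1]} supp H_t`. Let `Φ` be a Hamiltonian flow of the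
concatenation `H#H'`. Then `Fix(Φ₁) = Fix(ψ'₁)`, and the actions of fixed points with
respect to `H#H'` and `H'` agree. -/
theorem statement13 (n : ℕ) (hn : 1 ≤ n) (H H' : ℝ × V n → ℝ)
    (hH : IsTDHam n H) (hH' : IsTDHam n H') (δ : ℝ) (hδ : 0 < δ)
    (hvanish : ∀ t ∈ Set.Icc (0:ℝ) δ ∪ Set.Icc (1 - δ) 1,
      (∀ x, H (t, x) = 0) ∧ (∀ x, H' (t, x) = 0))
    (ψ ψ' : ℝ → V n → V n) (hψ : IsHamFlow n H ψ) (hψ' : IsHamFlow n H' ψ')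
    (hdisj : (ψ' 1 '' ⋃ t ∈ Set.Icc (0:ℝ) 1, tsupport fun x => H (t, x)) ∩
        (⋃ t ∈ Set.Icc (0:ℝ) 1, tsupport fun x => H (t, x)) = ∅)
    (Φ : ℝ → V n → V n) (hΦ : IsHamFlow n (concat n H H') Φ) :
    {x : V n | Φ 1 x = x} = {x : V n | ψ' 1 x = x} ∧
    ∀ x₀ : V n, ψ' 1 x₀ = x₀ →
      action n (concat n H H') Φ x₀ = action n H' ψ' x₀ := by
  obtain ⟨hψ0, hψD⟩ := hψ
  obtain ⟨hψ'0, hψ'D⟩ := hψ'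
  obtain ⟨hΦ0, hΦD⟩ := hΦ
  set X : Set (V n) := ⋃ t ∈ Set.Icc (0:ℝ) 1, tsupport fun x => H (t, x) with hXdef
  have hH1 : ∀ x, H (1, x) = 0 := fun x =>
    (hvanish 1 (Or.inr ⟨by linarith, le_refl 1⟩)).1 x
  have hH'0 : ∀ x, H' (0, x) = 0 := fun x =>
    (hvanish 0 (Or.inl ⟨le_refl 0, hδ.le⟩)).2 x
  obtain ⟨CH, hCH⟩ := hamVF_lipschitz hH
  obtain ⟨Cc, hCc⟩ := lipschitz_concat hH hH'
  -- Step 1 : Φ t x = ψ (2t) x on [0, 1/2]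
  have step1 : ∀ x, EqOn (fun t => Φ t x) (fun t => ψ (2 * t) x) (Icc (0:ℝ) (1/2)) := by
    intro x
    refine flow_unique_right hCc (fun t _ => hΦD x t) ?_ ?_
    · intro t ht
      have hg : HasDerivAt (fun s => ψ (2 * s) x)
          ((2:ℝ) • hamVF n H (2 * t) (ψ (2 * t) x)) t := by
        have h2 : HasDerivAt (fun s : ℝ => 2 * s) 2 t := by
          simpa using (hasDerivAt_id t).const_mul (2:ℝ)
        exact (hψD x (2 * t)).scomp t h2
      have he := hamVF_two_smul (K := H) (K' := concat n H H') hH.1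
        (concat_eq_left ht.1 ht.2) (ψ (2 * t) x)
      rw [he]
      exact hg
    · have : (2:ℝ) * 0 = 0 := by norm_num
      simp [hΦ0, this, hψ0]
  have hΦhalf : ∀ x, Φ (1/2 : ℝ) x = ψ 1 x := by
    intro x
    have := step1 x (right_mem_Icc.mpr (by norm_num))
    simpa using this
  -- Step 2 : Φ t x = ψ' (2t-1) (ψ 1 x) on [1/2, 1]
  have step2 : ∀ x, EqOn (fun t => Φ t x) (fun t => ψ' (2 * t - 1) (ψ 1 x))
      (Icc (1/2 : ℝ) 1) := by
    intro x
    refine flow_unique_right hCc (fun t _ => hΦD x t) ?_ ?_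
    · intro t ht
      have hg : HasDerivAt (fun s => ψ' (2 * s - 1) (ψ 1 x))
          ((2:ℝ) • hamVF n H' (2 * t - 1) (ψ' (2 * t - 1) (ψ 1 x))) t := by
        have h2 : HasDerivAt (fun s : ℝ => 2 * s - 1) 2 t := by
          simpa using ((hasDerivAt_id t).const_mul (2:ℝ)).sub_const 1
        exact (hψ'D (ψ 1 x) (2 * t - 1)).scomp t h2
      rcases eq_or_lt_of_le ht.1 with heq | hlt
      · rw [← heq]
        have hc0 : ∀ y, concat n H H' ((1/2 : ℝ), y) = 0 := by
          intro y
          have := concat_eq_left (H := H) (H' := H') (by norm_num : (0:ℝ) ≤ 1/2) le_rfl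
          have h2 := congrFun this y
          rw [h2]
          norm_num [hH1]
        rw [hamVF_zero_of_zero hc0]
        have hv' : hamVF n H' (2 * (1/2 : ℝ) - 1) (ψ' (2 * (1/2 : ℝ) - 1) (ψ 1 x)) = 0 := by
          have : (2 : ℝ) * (1/2) - 1 = 0 := by norm_num
          rw [this]
          exact hamVF_zero_of_zero hH'0 _
        have hg' := hg
        rw [← heq] at hg'
        rw [hv'] at hg'
        simpa using hg'
      · have he := hamVF_two_smul (K := H') (K' := concat n H H') hH'.1
          (concat_eq_right hlt ht.2) (ψ' (2 * t - 1) (ψ 1 x))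
        rw [he]
        exact hg
    · have : (2:ℝ) * (1/2) - 1 = 0 := by norm_num
      simp only [this, hψ'0, id_eq]
      exact hΦhalf x
  have hΦ1 : ∀ x, Φ 1 x = ψ' 1 (ψ 1 x) := by
    intro x
    have h := step2 x (right_mem_Icc.mpr (by norm_num))
    norm_num at h
    exact h
  -- vector field of H vanishes off X
  have hvfX : ∀ y, y ∉ X → ∀ t ∈ Icc (0:ℝ) 1, hamVF n H t y = 0 := by
    intro y hy t ht
    apply hamVF_zero_of_eventually
    have : y ∉ tsupport fun x => H (t, x) := fun hmem => hy (mem_biUnion ht hmem)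
    exact notMem_tsupport_iff_eventuallyEq.mp this
  -- stationarity off X
  have hfix : ∀ y, y ∉ X → ∀ t ∈ Icc (0:ℝ) 1, ψ t y = y := by
    intro y hy
    refine flow_unique_right (v := hamVF n H) hCH (fun t _ => hψD y t) ?_ ?_
    · intro t ht
      rw [hvfX y hy t ht]
      exact hasDerivAt_const t y
    · simp [hψ0]
  have hfix' : ∀ x, ψ 1 x ∉ X → ψ 1 x = x := by
    intro x hx
    have := flow_unique_left (v := hamVF n H) hCH (f := fun t => ψ t x)
      (g := fun _ => ψ 1 x) (a := 0) (b := 1) (fun t _ => hψD x t)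
      (fun t ht => by rw [hvfX _ hx t ht]; exact hasDerivAt_const t _) rfl
    have h0 := this (left_mem_Icc.mpr zero_le_one)
    simp only [hψ0, id_eq] at h0
    exact h0.symm
  have hdisj' : ∀ z ∈ X, ψ' 1 z ∉ X := by
    intro z hz hmem
    have : ψ' 1 z ∈ (ψ' 1 '' X) ∩ X := ⟨mem_image_of_mem _ hz, hmem⟩
    rw [hdisj] at this
    exact this
  constructor
  · ext x
    simp only [mem_setOf_eq]
    constructor
    · intro hfx
      rw [hΦ1 x] at hfx
      by_cases hx : ψ 1 x ∈ X
      · exfalso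
        have hxX : x ∈ X := by
          by_contra hxX
          have h1 := hfix x hxX 1 ⟨zero_le_one, le_rfl⟩
          rw [h1] at hx
          exact hxX hx
        exact hdisj' _ hx (by rw [hfx]; exact hxX)
      · have h1 := hfix' x hx
        rw [h1] at hfx
        exact hfx
    · intro hfx
      have hxX : x ∉ X := fun hx => hdisj' x hx (by rw [hfx]; exact hx)
      have h1 : ψ 1 x = x := hfix x hxX 1 ⟨zero_le_one, le_rfl⟩
      rw [hΦ1 x, h1, hfx]
  · intro x₀ hfx
    have hx₀X : x₀ ∉ X := fun hx => hdisj' x₀ hx (by rw [hfx]; exact hx)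
    have hψx₀ : ∀ t ∈ Icc (0:ℝ) 1, ψ t x₀ = x₀ := hfix x₀ hx₀X
    have hψ1 : ψ 1 x₀ = x₀ := hψx₀ 1 ⟨zero_le_one, le_rfl⟩
    have hΦ1half : ∀ t ∈ Icc (0:ℝ) (1/2), Φ t x₀ = x₀ := by
      intro t ht
      have h1 := step1 x₀ ht
      simp only at h1
      rw [h1]
      exact hψx₀ (2 * t) ⟨by linarith [ht.1], by linarith [ht.2]⟩
    have hΦ2half : ∀ t ∈ Icc (1/2 : ℝ) 1, Φ t x₀ = ψ' (2 * t - 1) x₀ := by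
      intro t ht
      have h1 := step2 x₀ ht
      simp only at h1
      rw [h1, hψ1]
    -- action computation
    have hcψ' : Continuous fun s => ψ' s x₀ :=
      continuous_iff_continuousAt.2 fun t => (hψ'D x₀ t).continuousAt
    set G : ℝ → ℝ := fun s => ∑ i : Fin n, (ψ' s x₀).2 i * (hamVF n H' s (ψ' s x₀)).1 i
      with hGdef
    set W : ℝ → ℝ := fun s => H' (s, ψ' s x₀) with hWdef
    have hGc : Continuous G := by
      rw [hGdef]
      refine continuous_finset_sum _ fun i _ => ?_
      refine ((continuous_apply i).comp (continuous_snd.comp hcψ')).mul ?_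
      exact cont_hamVF_comp hH'.1 hcψ' ((0 : Fin n → ℝ), Pi.single i 1)
    have hWc : Continuous W := hH'.1.continuous.comp (continuous_id.prodMk hcψ')
    have hvf'0 : ∀ z : V n, hamVF n H' 0 z = 0 := hamVF_zero_of_zero hH'0
    have hG0 : G 0 = 0 := by simp [hGdef, hvf'0]
    have hW0 : W 0 = 0 := hH'0 _
    have hderivΦ : ∀ (t : ℝ) (i : Fin n), deriv (fun s => (Φ s x₀).1 i) t
        = (hamVF n (concat n H H') t (Φ t x₀)).1 i := by
      intro t i
      have h := ((ContinuousLinearMap.proj (R := ℝ) (φ := fun _ : Fin n => ℝ) i).comp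
        (ContinuousLinearMap.fst ℝ (Fin n → ℝ) (Fin n → ℝ))).hasFDerivAt.comp_hasDerivAt
        t (hΦD x₀ t)
      exact h.deriv
    have hderivψ' : ∀ (t : ℝ) (i : Fin n), deriv (fun s => (ψ' s x₀).1 i) t
        = (hamVF n H' t (ψ' t x₀)).1 i := by
      intro t i
      have h := ((ContinuousLinearMap.proj (R := ℝ) (φ := fun _ : Fin n => ℝ) i).comp
        (ContinuousLinearMap.fst ℝ (Fin n → ℝ) (Fin n → ℝ))).hasFDerivAt.comp_hasDerivAt
        t (hψ'D x₀ t)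
      exact h.deriv
    -- general substitution identity
    have compgen : ∀ F : ℝ → ℝ, Continuous F → F 0 = 0 →
        (∫ t in (0:ℝ)..1, 2 * F (max (2 * t - 1) 0)) = ∫ s in (0:ℝ)..1, F s := by
      intro F hF hF0
      have h1 : (∫ t in (0:ℝ)..1, 2 * F (max (2 * t - 1) 0))
          = 2 * ∫ t in (0:ℝ)..1, (fun u => F (max u 0)) (2 * t - 1) := by
        rw [← intervalIntegral.integral_const_mul]
      rw [h1, intervalIntegral.integral_comp_mul_sub (fun u => F (max u 0)) two_ne_zero 1,
        smul_eq_mul, ← mul_assoc]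
      norm_num
      have hFm : Continuous fun u : ℝ => F (max u 0) :=
        hF.comp (continuous_id.max continuous_const)
      have hsplit := intervalIntegral.integral_add_adjacent_intervals
        (hFm.intervalIntegrable (μ := volume) (-1 : ℝ) 0)
        (hFm.intervalIntegrable (μ := volume) (0 : ℝ) 1)
      rw [← hsplit]
      have hz : (∫ u in (-1:ℝ)..0, F (max u 0)) = 0 := by
        have he : EqOn (fun u : ℝ => F (max u 0)) (fun _ => F 0) (uIcc (-1:ℝ) 0) := by
          intro u hu
          rw [uIcc_of_le (by norm_num)] at hu
          show F (max u 0) = F 0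
          rw [max_eq_right hu.2]
        rw [intervalIntegral.integral_congr he]
        simp [hF0]
      have hid : (∫ u in (0:ℝ)..1, F (max u 0)) = ∫ s in (0:ℝ)..1, F s := by
        refine intervalIntegral.integral_congr fun u hu => ?_
        rw [uIcc_of_le zero_le_one] at hu
        show F (max u 0) = F u
        rw [max_eq_left hu.1]
      rw [hz, hid, zero_add]
    -- first integrand
    have hmain1 : EqOn (fun t => ∑ i : Fin n, (Φ t x₀).2 i * deriv (fun s => (Φ s x₀).1 i) t)
        (fun t => 2 * G (max (2 * t - 1) 0)) (uIcc (0:ℝ) 1) := by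
      intro t ht
      rw [uIcc_of_le zero_le_one] at ht
      rcases le_or_gt t (1/2) with h | h
      · have hΦt : Φ t x₀ = x₀ := hΦ1half t ⟨ht.1, h⟩
        have hvf : hamVF n (concat n H H') t (Φ t x₀) = 0 := by
          rw [hΦt, hamVF_two_smul hH.1 (concat_eq_left ht.1 h) x₀,
            hvfX x₀ hx₀X (2 * t) ⟨by linarith [ht.1], by linarith⟩, smul_zero]
        have hmax : max (2 * t - 1) 0 = 0 := max_eq_right (by linarith)
        simp [hderivΦ, hvf, hmax, hG0]
      · have hΦt : Φ t x₀ = ψ' (2 * t - 1) x₀ := hΦ2half t ⟨h.le, ht.2⟩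
        have hvf : hamVF n (concat n H H') t (Φ t x₀)
            = (2:ℝ) • hamVF n H' (2 * t - 1) (ψ' (2 * t - 1) x₀) := by
          rw [hΦt]
          exact hamVF_two_smul hH'.1 (concat_eq_right h ht.2) _
        have hmax : max (2 * t - 1) 0 = 2 * t - 1 := max_eq_left (by linarith)
        rw [hΦt] at hvf
        simp only [hderivΦ, hΦt, hvf, hmax, hGdef]
        rw [Finset.mul_sum]
        refine Finset.sum_congr rfl fun i _ => ?_
        simp only [Prod.smul_fst, Pi.smul_apply, smul_eq_mul]
        ring
    -- second integrand
    have hmain2 : EqOn (fun t => concat n H H' (t, Φ t x₀))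
        (fun t => 2 * W (max (2 * t - 1) 0)) (uIcc (0:ℝ) 1) := by
      intro t ht
      rw [uIcc_of_le zero_le_one] at ht
      rcases le_or_gt t (1/2) with h | h
      · have hΦt : Φ t x₀ = x₀ := hΦ1half t ⟨ht.1, h⟩
        have hHt : H (2 * t, x₀) = 0 := by
          have hx : x₀ ∉ tsupport fun x => H (2 * t, x) := fun hmem =>
            hx₀X (mem_biUnion (⟨by linarith [ht.1], by linarith⟩ : (2 * t) ∈ Icc (0:ℝ) 1) hmem)
          exact image_eq_zero_of_notMem_tsupport (f := fun x : V n => H (2 * t, x)) hx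
        have h1 := congrFun (concat_eq_left (H := H) (H' := H') ht.1 h) x₀
        have hmax : max (2 * t - 1) 0 = 0 := max_eq_right (by linarith)
        simp only [hΦt]
        rw [h1, hHt, hmax, hW0]
      · have hΦt : Φ t x₀ = ψ' (2 * t - 1) x₀ := hΦ2half t ⟨h.le, ht.2⟩
        have h1 := congrFun (concat_eq_right (H := H) (H' := H') h ht.2) (Φ t x₀)
        have hmax : max (2 * t - 1) 0 = 2 * t - 1 := max_eq_left (by linarith)
        show concat n H H' (t, Φ t x₀) = 2 * W (max (2 * t - 1) 0)
        rw [h1, hΦt, hmax, hWdef]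
    -- assemble
    show (∫ t in (0:ℝ)..1, ∑ i : Fin n, (Φ t x₀).2 i * deriv (fun s => (Φ s x₀).1 i) t) -
        (∫ t in (0:ℝ)..1, concat n H H' (t, Φ t x₀))
      = (∫ t in (0:ℝ)..1, ∑ i : Fin n, (ψ' t x₀).2 i * deriv (fun s => (ψ' s x₀).1 i) t) -
        (∫ t in (0:ℝ)..1, H' (t, ψ' t x₀))
    rw [intervalIntegral.integral_congr hmain1, intervalIntegral.integral_congr hmain2,
      compgen G hGc hG0, compgen W hWc hW0]
    congr 1
    refine intervalIntegral.integral_congr fun t _ => ?_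
    simp only [hGdef]
    exact (Finset.sum_congr rfl fun i _ => by rw [hderivψ' t i]).symm


end
end
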